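/- arXiv:1702.06579 — 6 statements merged into one kernel-verified Lean document; each statement's English description precedes it below -/
import Mathlib

section
/- Let θ be a weighting and let ε be a rational number with 0 < ε < 1/(2nℓ). Then the loading map (r,c,m) ↦ I_(r,c,m) is injective on the set of boxes with r + c ≤ 2n: if (r,c,m) and (r′,c′,m′) are boxes with r + c ≤ 2n and r′ + c′ ≤ 2n and I_(r,c,m) = I_(r′,c′,m′), then (r,c,m) = (r′,c′,m′). -/
/-- A box `(r, c, m)`: row `r`, column `c`, component `m`. -/
abbrev Box : Type := ℤ × ℤ × ℤ

/-- `b` is a box for level `ℓ`. -/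
def IsBox (ℓ : ℕ) (b : Box) : Prop :=
  1 ≤ b.1 ∧ 1 ≤ b.2.1 ∧ 1 ≤ b.2.2 ∧ b.2.2 ≤ (ℓ : ℤ)

/-- A weighting `θ = (θ_1, …, θ_ℓ)`: rational numbers with `ℓ·θ_m ∈ ℤ` and
`θ_i − θ_j ∉ ℤ` for `i ≠ j` (within the range `1 ≤ m ≤ ℓ`). -/
structure Weighting (ℓ : ℕ) where
  θ : ℤ → ℚ
  mul_int : ∀ m : ℤ, 1 ≤ m → m ≤ (ℓ : ℤ) → ∃ z : ℤ, (ℓ : ℚ) * θ m = (z : ℚ)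
  sep : ∀ i j : ℤ, 1 ≤ i → i ≤ (ℓ : ℤ) → 1 ≤ j → j ≤ (ℓ : ℤ) → i ≠ j →
      ∀ z : ℤ, θ i - θ j ≠ (z : ℚ)

/-- `b >_θ b'`. -/
def ThetaGT {ℓ : ℕ} (W : Weighting ℓ) (b b' : Box) : Prop :=
  (W.θ b.2.2 + (b.1 : ℚ) - (b.2.1 : ℚ) < W.θ b'.2.2 + (b'.1 : ℚ) - (b'.2.1 : ℚ)) ∨
    (W.θ b.2.2 + (b.1 : ℚ) - (b.2.1 : ℚ) = W.θ b'.2.2 + (b'.1 : ℚ) - (b'.2.1 : ℚ) ∧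
      b.1 + b.2.1 < b'.1 + b'.2.1)

/-- The loading `I_(r,c,m) = θ_m + r − c + (r+c)·ε`. -/
def loading {ℓ : ℕ} (W : Weighting ℓ) (ε : ℚ) (b : Box) : ℚ :=
  W.θ b.2.2 + (b.1 : ℚ) - (b.2.1 : ℚ) + ((b.1 : ℚ) + (b.2.1 : ℚ)) * ε

/-- The residue `res(r,c,m) = κ_m + c − r`. -/
def ResBox {α : Type*} [AddGroupWithOne α] (κ : ℤ → α) (b : Box) : α :=
  κ b.2.2 + ((b.2.1 - b.1 : ℤ) : α)

/-- The `θ`-dominance order `λ ⊵_θ μ` on finite sets of boxes. -/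
def DominatesS {ℓ : ℕ} (W : Weighting ℓ) {α : Type*} [AddGroupWithOne α] (κ : ℤ → α)
    (lam mu : Set Box) : Prop :=
  ∀ b ∈ mu,
    ({b' ∈ mu | ResBox κ b' = ResBox κ b ∧ (b' = b ∨ ThetaGT W b' b)}).ncard ≤
      ({b' ∈ lam | ResBox κ b' = ResBox κ b ∧ (b' = b ∨ ThetaGT W b' b)}).ncard

/-- The Young diagram of a tuple of row lengths `p m r`. -/
def diagram (p : ℤ → ℤ → ℕ) : Set Box :=
  {b : Box | 1 ≤ b.2.1 ∧ b.2.1 ≤ (p b.2.2 b.1 : ℤ)}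

/-- An `ℓ`-multipartition of `n`, recorded by its row lengths `part m r = λ^(m)_r`. -/
structure Multipartition (ℓ n : ℕ) where
  part : ℤ → ℤ → ℕ
  decr : ∀ m r : ℤ, 1 ≤ r → part m (r + 1) ≤ part m r
  supp : ∀ m r : ℤ, (m < 1 ∨ (ℓ : ℤ) < m ∨ r < 1) → part m r = 0
  finite : (diagram part).Finite
  size : (diagram part).ncard = n

/-- `θ`-dominance for multipartitions. -/
def DomGE {ℓ n : ℕ} (W : Weighting ℓ) {α : Type*} [AddGroupWithOne α] (κ : ℤ → α)
    (lam mu : Multipartition ℓ n) : Prop :=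
  DominatesS W κ (diagram lam.part) (diagram mu.part)

/-- Strict `θ`-dominance for multipartitions. -/
def DomGT {ℓ n : ℕ} (W : Weighting ℓ) {α : Type*} [AddGroupWithOne α] (κ : ℤ → α)
    (lam mu : Multipartition ℓ n) : Prop :=
  DomGE W κ lam mu ∧ lam ≠ mu

/-- A standard tableau of shape `λ`: a bijection from `[λ]` to `{1, …, n}` increasing
along rows and columns (normalised to take the value `0` off the diagram). -/
structure IsStdTableau {ℓ n : ℕ} (lam : Multipartition ℓ n) (t : Box → ℕ) : Prop where
  mem : ∀ b ∈ diagram lam.part, 1 ≤ t b ∧ t b ≤ n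
  injOn : ∀ b ∈ diagram lam.part, ∀ b' ∈ diagram lam.part, t b = t b' → b = b'
  surjOn : ∀ k : ℕ, 1 ≤ k → k ≤ n → ∃ b ∈ diagram lam.part, t b = k
  row_lt : ∀ r c m : ℤ, (r, c, m) ∈ diagram lam.part → (r, c + 1, m) ∈ diagram lam.part →
      t (r, c, m) < t (r, c + 1, m)
  col_lt : ∀ r c m : ℤ, (r, c, m) ∈ diagram lam.part → (r + 1, c, m) ∈ diagram lam.part →
      t (r, c, m) < t (r + 1, c, m)
  zero_off : ∀ b : Box, b ∉ diagram lam.part → t b = 0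

/-- The set of standard tableaux of shape `λ`. -/
def StdTab {ℓ n : ℕ} (lam : Multipartition ℓ n) : Type :=
  {t : Box → ℕ // IsStdTableau lam t}

/-- A semistandard tableau of shape `λ` and weight `μ`: a bijection from `[λ]` onto
`{I_b : b ∈ [μ]}` satisfying the three semistandardness conditions. -/
structure IsSStdTableau {ℓ n : ℕ} (W : Weighting ℓ) (ε : ℚ)
    (lam mu : Multipartition ℓ n) (T : Box → ℚ) : Prop where
  mem : ∀ b ∈ diagram lam.part, ∃ b' ∈ diagram mu.part, T b = loading W ε b'
  injOn : ∀ b ∈ diagram lam.part, ∀ b' ∈ diagram lam.part, T b = T b' → b = b'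
  surjOn : ∀ b' ∈ diagram mu.part, ∃ b ∈ diagram lam.part, T b = loading W ε b'
  first : ∀ m : ℤ, ((1 : ℤ), (1 : ℤ), m) ∈ diagram lam.part → W.θ m < T (1, 1, m)
  col : ∀ r c m : ℤ, (r, c, m) ∈ diagram lam.part → (r - 1, c, m) ∈ diagram lam.part →
      T (r - 1, c, m) + 1 < T (r, c, m)
  row : ∀ r c m : ℤ, (r, c, m) ∈ diagram lam.part → (r, c - 1, m) ∈ diagram lam.part →
      T (r, c - 1, m) - 1 < T (r, c, m)

/-- `a` is an addable box of the box-configuration `S`. -/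
def AddableBox (ℓ : ℕ) (S : Set Box) (a : Box) : Prop :=
  a ∉ S ∧ ∃ (N : ℕ) (q : Multipartition ℓ N), diagram q.part = insert a S

/-- `b` is a removable box of the box-configuration `S`. -/
def RemovableBox (ℓ : ℕ) (S : Set Box) (b : Box) : Prop :=
  b ∈ S ∧ ∃ (N : ℕ) (q : Multipartition ℓ N), diagram q.part = S \ {b}

/-- A removable box `b` of the configuration `S` (of residue `i = res b`) is cyclic. -/
def CyclicRemovable {ℓ : ℕ} (W : Weighting ℓ) {α : Type*} [AddGroupWithOne α]
    (κ : ℤ → α) (S : Set Box) (b : Box) : Prop :=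
  RemovableBox ℓ S b ∧
    (∀ b' ∈ S,
      (ResBox κ b' = ResBox κ b - 1 ∨ ResBox κ b' = ResBox κ b ∨
        ResBox κ b' = ResBox κ b + 1) →
      ThetaGT W b b' → b'.2.2 = b.2.2 ∧ b'.1 = b.1) ∧
    (∀ a : Box, AddableBox ℓ S a → ResBox κ a = ResBox κ b →
      (ThetaGT W a b ∨ ∀ b' ∈ S, ResBox κ b' = ResBox κ b → ThetaGT W b' a))

/-- A standard tableau is cyclic if each partial shape is obtained by adding a cyclic box. -/
def IsCyclicTableau {ℓ n : ℕ} (W : Weighting ℓ) {α : Type*} [AddGroupWithOne α]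
    (κ : ℤ → α) (lam : Multipartition ℓ n) (t : Box → ℕ) : Prop :=
  ∀ b ∈ diagram lam.part,
    CyclicRemovable W κ {b' ∈ diagram lam.part | t b' ≤ t b} b

/-- The set `𝒜_t(k)` where `b = t⁻¹(k)`. -/
def ASet {ℓ n : ℕ} (W : Weighting ℓ) {α : Type*} [AddGroupWithOne α] (κ : ℤ → α)
    (lam : Multipartition ℓ n) (t : Box → ℕ) (b : Box) : Set Box :=
  {a : Box | AddableBox ℓ {b' ∈ diagram lam.part | t b' ≤ t b} a ∧
    ResBox κ a = ResBox κ b ∧ ThetaGT W b a}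

/-- The set `ℛ_t(k)` where `b = t⁻¹(k)`. -/
def RSet {ℓ n : ℕ} (W : Weighting ℓ) {α : Type*} [AddGroupWithOne α] (κ : ℤ → α)
    (lam : Multipartition ℓ n) (t : Box → ℕ) (b : Box) : Set Box :=
  {a : Box | RemovableBox ℓ {b' ∈ diagram lam.part | t b' ≤ t b} a ∧
    ResBox κ a = ResBox κ b ∧ ThetaGT W b a}

/-- The degree of a standard tableau: `deg t = Σ_k (|𝒜_t(k)| − |ℛ_t(k)|)`. -/
noncomputable def tabDeg {ℓ n : ℕ} (W : Weighting ℓ) {α : Type*} [AddGroupWithOne α]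
    (κ : ℤ → α) (lam : Multipartition ℓ n) (t : Box → ℕ) : ℤ :=
  ∑ᶠ b ∈ diagram lam.part,
    (((ASet W κ lam t b).ncard : ℤ) - ((RSet W κ lam t b).ncard : ℤ))

/-- the loading map is injective on boxes with `r + c ≤ 2n`. -/
theorem loading_injective (ℓ n : ℕ) (hℓ : 1 ≤ ℓ) (hn : 1 ≤ n) (W : Weighting ℓ)
    (ε : ℚ) (hε0 : 0 < ε) (hε1 : ε < 1 / (2 * n * ℓ)) :
    ∀ b b' : Box, IsBox ℓ b → IsBox ℓ b' →
      b.1 + b.2.1 ≤ 2 * (n : ℤ) → b'.1 + b'.2.1 ≤ 2 * (n : ℤ) →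
      loading W ε b = loading W ε b' → b = b' := by
  have hpos : (0:ℚ) < 2 * n * ℓ := by positivity
  have hε1' : ε * (2 * n * ℓ) < 1 := by
    rw [lt_div_iff₀ hpos] at hε1; linarith
  have hℓQ : (1:ℚ) ≤ (ℓ:ℚ) := by exact_mod_cast hℓ
  rintro ⟨r, c, m⟩ ⟨r', c', m'⟩ ⟨hr, hc, hm1, hm2⟩ ⟨hr', hc', hm1', hm2'⟩ hs hs' heq
  simp only [IsBox] at *
  simp only [loading] at heq
  have hS0 : ∀ S : ℤ, -2*(n:ℤ) ≤ S → S ≤ 2*(n:ℤ) →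
      ∀ k : ℤ, (k:ℚ) = (S:ℚ) * (ℓ:ℚ) * ε → S = 0 := by
    intro S hS1 hS2 k hk
    have habs : |(k:ℚ)| < 1 := by
      rw [hk, abs_mul, abs_mul, abs_of_pos hε0]
      have h1 : |(S:ℚ)| ≤ 2*(n:ℚ) := by
        rw [abs_le]; constructor <;> [exact_mod_cast hS1; exact_mod_cast hS2]
      have h2 : |(ℓ:ℚ)| = (ℓ:ℚ) := abs_of_nonneg (by positivity)
      rw [h2]
      calc |(S:ℚ)| * (ℓ:ℚ) * ε ≤ 2*(n:ℚ) * (ℓ:ℚ) * ε := by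
            apply mul_le_mul_of_nonneg_right _ hε0.le
            exact mul_le_mul_of_nonneg_right h1 (by positivity)
        _ < 1 := by rw [mul_comm] at hε1' ⊢; linarith
    have hk0 : k = 0 := by
      have h := abs_lt.mp (show |k| < 1 by exact_mod_cast habs)
      omega
    rw [hk0] at hk
    have : (S:ℚ) = 0 := by
      rcases mul_eq_zero.1 hk.symm with h | h
      · rcases mul_eq_zero.1 h with h | h
        · exact h
        · exact absurd h (by positivity)
      · exact absurd h (ne_of_gt hε0)
    exact_mod_cast this
  by_cases hmm : m = m'
  · subst hmm
    set S : ℤ := r' + c' - r - c with hSdef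
    have hSeq : S = 0 := by
      apply hS0 S (by omega) (by omega) (ℓ * (r - c - r' + c'))
      have this : (r:ℚ) - c - r' + c' = ((r':ℚ) + c' - r - c) * ε := by linarith
      simp only [hSdef]
      push_cast
      linear_combination (ℓ:ℚ) * this
    have h1 : (r:ℚ) - c = (r':ℚ) - c' := by
      have hS : (r':ℚ) + c' - r - c = 0 := by exact_mod_cast hSeq
      nlinarith [heq, hS]
    have h2 : r - c = r' - c' := by exact_mod_cast h1
    have h3 : r + c = r' + c' := by omega
    have : r = r' ∧ c = c' := by omega
    simp [this.1, this.2]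
  · exfalso
    obtain ⟨z, hz⟩ := W.mul_int m hm1 hm2
    obtain ⟨z', hz'⟩ := W.mul_int m' hm1' hm2'
    set S : ℤ := r' + c' - r - c with hSdef
    have hdiff : W.θ m - W.θ m' = ((r' - c' - r + c : ℤ):ℚ) + (S:ℚ) * ε := by
      push_cast [hSdef]; linarith
    have hSeq : S = 0 := by
      apply hS0 S (by omega) (by omega) (z - z' - ℓ * (r' - c' - r + c))
      have hl : (ℓ:ℚ) * (W.θ m - W.θ m') = (z:ℚ) - z' := by
        rw [mul_sub, hz, hz']
      rw [hdiff] at hl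
      simp only [hSdef] at hl ⊢
      push_cast at hl ⊢
      linear_combination -hl
    rw [hSeq] at hdiff
    push_cast at hdiff
    exact W.sep m m' hm1 hm2 hm1' hm2' hmm (r' - c' - r + c)
      (by push_cast; linarith)
end

section
/- Let θ be a weighting and let ε be a rational number with 0 < ε < 1/(2nℓ). For any two boxes (r,c,m) and (r′,c′,m′) with r + c ≤ 2n and r′ + c′ ≤ 2n, one has (r,c,m) >_θ (r′,c′,m′) if and only if I_(r,c,m) < I_(r′,c′,m′). -/
/-- `b >_θ b'` iff `I_b < I_{b'}`, on boxes with `r + c ≤ 2n`. -/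
theorem thetaGT_iff_loading_lt (ℓ n : ℕ) (hℓ : 1 ≤ ℓ) (hn : 1 ≤ n) (W : Weighting ℓ)
    (ε : ℚ) (hε0 : 0 < ε) (hε1 : ε < 1 / (2 * n * ℓ)) :
    ∀ b b' : Box, IsBox ℓ b → IsBox ℓ b' →
      b.1 + b.2.1 ≤ 2 * (n : ℤ) → b'.1 + b'.2.1 ≤ 2 * (n : ℤ) →
      (ThetaGT W b b' ↔ loading W ε b < loading W ε b') := by
  intro b b' hb hb' hs hs'
  obtain ⟨hr, hc, hm1, hm2⟩ := hb
  obtain ⟨hr', hc', hm1', hm2'⟩ := hb'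
  set A : ℚ := W.θ b.2.2 + (b.1 : ℚ) - (b.2.1 : ℚ) with hA
  set A' : ℚ := W.θ b'.2.2 + (b'.1 : ℚ) - (b'.2.1 : ℚ) with hA'
  have hlq : (0 : ℚ) < (ℓ : ℚ) := by exact_mod_cast hℓ
  have hnq : (1 : ℚ) ≤ (n : ℚ) := by exact_mod_cast hn
  obtain ⟨z1, hz1⟩ := W.mul_int b.2.2 hm1 hm2
  obtain ⟨z2, hz2⟩ := W.mul_int b'.2.2 hm1' hm2'
  have hint : ∃ z : ℤ, (ℓ : ℚ) * (A' - A) = (z : ℚ) := by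
    refine ⟨z2 - z1 + ℓ * (b'.1 - b'.2.1 - b.1 + b.2.1), ?_⟩
    rw [hA, hA']
    push_cast
    linear_combination hz2 - hz1
  have hεℓ : 2 * (n : ℚ) * ε < 1 / (ℓ : ℚ) := by
    rw [lt_div_iff₀ (by positivity)] at hε1
    rw [lt_div_iff₀ hlq]
    nlinarith
  have hsq : (b.1 : ℚ) + (b.2.1 : ℚ) ≤ 2 * (n : ℚ) := by exact_mod_cast hs
  have hsq' : (b'.1 : ℚ) + (b'.2.1 : ℚ) ≤ 2 * (n : ℚ) := by exact_mod_cast hs'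
  have hs2 : (2 : ℚ) ≤ (b.1 : ℚ) + (b.2.1 : ℚ) := by
    have : (2 : ℤ) ≤ b.1 + b.2.1 := by linarith
    exact_mod_cast this
  have hs2' : (2 : ℚ) ≤ (b'.1 : ℚ) + (b'.2.1 : ℚ) := by
    have : (2 : ℤ) ≤ b'.1 + b'.2.1 := by linarith
    exact_mod_cast this
  have hgap : ∀ {x y : ℚ}, (∃ z : ℤ, (ℓ : ℚ) * (y - x) = (z : ℚ)) → x < y → x + 1/ℓ ≤ y := by
    rintro x y ⟨z, hz⟩ hxy
    have hz0 : (0 : ℚ) < (z : ℚ) := by nlinarith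
    have h1 : (1 : ℤ) ≤ z := by exact_mod_cast hz0
    have h1q : (1 : ℚ) ≤ (z : ℚ) := by exact_mod_cast h1
    have hle : 1 / (ℓ : ℚ) ≤ y - x := by
      rw [div_le_iff₀ hlq]
      nlinarith
    linarith
  have key : ((b.1:ℚ) + (b.2.1:ℚ)) * ε - ((b'.1:ℚ) + (b'.2.1:ℚ)) * ε < 1 / (ℓ:ℚ) := by
    have h1 := mul_le_mul_of_nonneg_right hsq hε0.le
    have h2 := mul_le_mul_of_nonneg_right hs2' hε0.le
    nlinarith
  have key' : ((b'.1:ℚ) + (b'.2.1:ℚ)) * ε - ((b.1:ℚ) + (b.2.1:ℚ)) * ε < 1 / (ℓ:ℚ) := by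
    have h1 := mul_le_mul_of_nonneg_right hsq' hε0.le
    have h2 := mul_le_mul_of_nonneg_right hs2 hε0.le
    nlinarith
  simp only [ThetaGT, loading, ← hA, ← hA']
  constructor
  · rintro (h | ⟨h, hlt⟩)
    · have := hgap hint h
      linarith
    · have hltq : (b.1 : ℚ) + (b.2.1 : ℚ) < (b'.1 : ℚ) + (b'.2.1 : ℚ) := by exact_mod_cast hlt
      have := mul_lt_mul_of_pos_right hltq hε0
      linarith
  · intro h
    rcases lt_trichotomy A A' with h1 | h1 | h1
    · exact Or.inl h1
    · refine Or.inr ⟨h1, ?_⟩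
      have hq : ((b.1:ℚ) + (b.2.1:ℚ)) * ε < ((b'.1:ℚ) + (b'.2.1:ℚ)) * ε := by linarith
      have hlt : (b.1 : ℚ) + (b.2.1 : ℚ) < (b'.1 : ℚ) + (b'.2.1 : ℚ) :=
        lt_of_mul_lt_mul_right hq hε0.le
      exact_mod_cast hlt
    · exfalso
      have hint' : ∃ z : ℤ, (ℓ : ℚ) * (A - A') = (z : ℚ) := by
        obtain ⟨z, hz⟩ := hint
        exact ⟨-z, by push_cast; linarith⟩
      have := hgap hint' h1
      linarith
end

section
/- Let θ be a weighting, e ≥ 2 an integer and κ ∈ (ℤ/eℤ)^ℓ an e-multicharge. The relation ⊵_θ is a partial order on the collection of n-element finite sets of boxes: it is reflexive, transitive, and if λ ⊵_θ μ and μ ⊵_θ λ for n-element sets λ, μ of boxes then λ = μ. In particular ⊵_θ restricts to a partial order on the set of ℓ-multipartitions of n. -/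
namespace DomAux

variable {ℓ : ℕ}

/-- Lexicographic key realising `ThetaGT` as a strict order. -/
def key (W : Weighting ℓ) (b : Box) : ℚ ×ₗ ℤ :=
  toLex (W.θ b.2.2 + (b.1 : ℚ) - (b.2.1 : ℚ), b.1 + b.2.1)

lemma thetaGT_iff (W : Weighting ℓ) (b b' : Box) :
    ThetaGT W b b' ↔ key W b < key W b' := by
  simp [ThetaGT, key, Prod.Lex.lt_iff]

lemma key_inj (W : Weighting ℓ) {b b' : Box} (hb : IsBox ℓ b) (hb' : IsBox ℓ b')
    (h : key W b = key W b') : b = b' := by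
  obtain ⟨r, c, m⟩ := b; obtain ⟨r', c', m'⟩ := b'
  simp only [key, toLex_inj, Prod.mk.injEq] at h
  obtain ⟨h1, h2⟩ := h
  have hm : m = m' := by
    by_contra hne
    refine W.sep m m' hb.2.2.1 hb.2.2.2 hb'.2.2.1 hb'.2.2.2 hne ((r' - c') - (r - c)) ?_
    push_cast
    linarith
  subst hm
  have h1' : (r : ℚ) - c = (r' : ℚ) - c' := by linarith
  have h1'' : r - c = r' - c' := by exact_mod_cast h1'
  have hr : r = r' := by omega
  have hc : c = c' := by omega
  simp [hr, hc]

/-- `b' ⊵ b` as a predicate. -/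
def Ge (W : Weighting ℓ) (b' b : Box) : Prop := b' = b ∨ ThetaGT W b' b

lemma Ge.key_le {W : Weighting ℓ} {b' b : Box} (h : Ge W b' b) : key W b' ≤ key W b := by
  rcases h with h | h
  · exact le_of_eq (by rw [h])
  · exact le_of_lt ((thetaGT_iff W b' b).1 h)

lemma ge_of_key_le {W : Weighting ℓ} {b' b : Box} (hb' : IsBox ℓ b') (hb : IsBox ℓ b)
    (h : key W b' ≤ key W b) : Ge W b' b := by
  rcases lt_or_eq_of_le h with h | h
  · exact Or.inr ((thetaGT_iff W b' b).2 h)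
  · exact Or.inl (key_inj W hb' hb h)

lemma Ge.trans {W : Weighting ℓ} {b'' b' b : Box} (h1 : Ge W b'' b') (h2 : Ge W b' b) :
    Ge W b'' b := by
  rcases h1 with rfl | h1
  · exact h2
  · rcases h2 with rfl | h2
    · exact Or.inr h1
    · exact Or.inr ((thetaGT_iff W b'' b).2
        (lt_trans ((thetaGT_iff W _ _).1 h1) ((thetaGT_iff W _ _).1 h2)))

lemma not_thetaGT_self (W : Weighting ℓ) (b : Box) : ¬ ThetaGT W b b := by
  rw [thetaGT_iff]; exact lt_irrefl _

/-- Dominance counts extend from boxes of `mu` to all boxes. -/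
lemma dom_all {α : Type*} [AddGroupWithOne α] (κ : ℤ → α) (W : Weighting ℓ)
    {lam mu : Set Box} (hlam : lam.Finite) (hmu : mu.Finite)
    (hbox : ∀ b ∈ mu, IsBox ℓ b)
    (hd : DominatesS W κ lam mu) (b : Box) :
    ({b' ∈ mu | ResBox κ b' = ResBox κ b ∧ (b' = b ∨ ThetaGT W b' b)}).ncard ≤
    ({b' ∈ lam | ResBox κ b' = ResBox κ b ∧ (b' = b ∨ ThetaGT W b' b)}).ncard := by
  set T : Set Box := {b' ∈ mu | ResBox κ b' = ResBox κ b ∧ (b' = b ∨ ThetaGT W b' b)} with hT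
  rcases T.eq_empty_or_nonempty with h0 | hne
  · rw [h0]; simp
  · obtain ⟨b₀, hb₀T, hmax⟩ := Set.exists_max_image T (key W) (hmu.subset (fun x hx => hx.1)) hne
    obtain ⟨hb₀mu, hb₀res, hb₀ge⟩ := hb₀T
    have hTeq : T = {b' ∈ mu | ResBox κ b' = ResBox κ b₀ ∧ (b' = b₀ ∨ ThetaGT W b' b₀)} := by
      ext b'
      constructor
      · rintro ⟨hmem, hres, hge⟩
        refine ⟨hmem, by rw [hres, hb₀res], ?_⟩
        exact ge_of_key_le (hbox _ hmem) (hbox _ hb₀mu) (hmax b' ⟨hmem, hres, hge⟩)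
      · rintro ⟨hmem, hres, hge⟩
        exact ⟨hmem, by rw [hres, hb₀res], Ge.trans hge hb₀ge⟩
    have hsub : {b' ∈ lam | ResBox κ b' = ResBox κ b₀ ∧ (b' = b₀ ∨ ThetaGT W b' b₀)} ⊆
        {b' ∈ lam | ResBox κ b' = ResBox κ b ∧ (b' = b ∨ ThetaGT W b' b)} := by
      rintro b' ⟨hmem, hres, hge⟩
      exact ⟨hmem, by rw [hres, hb₀res], Ge.trans hge hb₀ge⟩
    calc T.ncard = ({b' ∈ mu | ResBox κ b' = ResBox κ b₀ ∧ (b' = b₀ ∨ ThetaGT W b' b₀)}).ncard := by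
          rw [hTeq]
      _ ≤ ({b' ∈ lam | ResBox κ b' = ResBox κ b₀ ∧ (b' = b₀ ∨ ThetaGT W b' b₀)}).ncard := hd b₀ hb₀mu
      _ ≤ _ := Set.ncard_le_ncard hsub (hlam.subset (fun x hx => hx.1))

lemma dom_absurd {α : Type*} [AddGroupWithOne α] (κ : ℤ → α) (W : Weighting ℓ)
    {lam mu : Set Box} (hlam : lam.Finite)
    (hd : DominatesS W κ lam mu) {b : Box} (hbmu : b ∈ mu) (hbl : b ∉ lam)
    (hmin : ∀ b' : Box, ((b' ∈ lam ∧ b' ∉ mu) ∨ (b' ∈ mu ∧ b' ∉ lam)) →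
      ResBox κ b' = ResBox κ b → ¬ ThetaGT W b' b) : False := by
  set S : Set Box := {b' | (b' ∈ lam ∧ b' ∈ mu) ∧ ResBox κ b' = ResBox κ b ∧ ThetaGT W b' b}
    with hS
  have hSfin : S.Finite := hlam.subset (fun x hx => hx.1.1)
  have hbS : b ∉ S := fun hx => not_thetaGT_self W b hx.2.2
  have hL : {b' ∈ lam | ResBox κ b' = ResBox κ b ∧ (b' = b ∨ ThetaGT W b' b)} = S := by
    ext b'
    constructor
    · rintro ⟨hmem, hres, hge⟩
      rcases hge with rfl | hgt
      · exact absurd hmem hbl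
      · have hmu' : b' ∈ mu := by
          by_contra hnot
          exact hmin b' (Or.inl ⟨hmem, hnot⟩) hres hgt
        exact ⟨⟨hmem, hmu'⟩, hres, hgt⟩
    · rintro ⟨⟨h1, _⟩, hres, hgt⟩
      exact ⟨h1, hres, Or.inr hgt⟩
  have hM : {b' ∈ mu | ResBox κ b' = ResBox κ b ∧ (b' = b ∨ ThetaGT W b' b)} = insert b S := by
    ext b'
    constructor
    · rintro ⟨hmem, hres, hge⟩
      rcases hge with rfl | hgt
      · exact Set.mem_insert _ _
      · have hlam' : b' ∈ lam := by
          by_contra hnot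
          exact hmin b' (Or.inr ⟨hmem, hnot⟩) hres hgt
        exact Set.mem_insert_of_mem _ ⟨⟨hlam', hmem⟩, hres, hgt⟩
    · rintro (rfl | ⟨⟨_, h2⟩, hres, hgt⟩)
      · exact ⟨hbmu, rfl, Or.inl rfl⟩
      · exact ⟨h2, hres, Or.inr hgt⟩
  have := hd b hbmu
  rw [hL, hM, Set.ncard_insert_of_notMem hbS hSfin] at this
  omega

lemma dom_antisymm {α : Type*} [AddGroupWithOne α] (κ : ℤ → α) (W : Weighting ℓ)
    {lam mu : Set Box} (hlam : lam.Finite) (hmu : mu.Finite)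
    (hbl : ∀ b ∈ lam, IsBox ℓ b) (hbm : ∀ b ∈ mu, IsBox ℓ b)
    (h1 : DominatesS W κ lam mu) (h2 : DominatesS W κ mu lam) : lam = mu := by
  by_contra hne
  have hD : ∃ d : Box, (d ∈ lam ∧ d ∉ mu) ∨ (d ∈ mu ∧ d ∉ lam) := by
    by_contra hno
    push_neg at hno
    apply hne
    ext x
    constructor
    · intro hx
      by_contra hxm
      exact absurd (hno x).1 (by simp [hx, hxm])
    · intro hx
      by_contra hxl
      exact absurd (hno x).2 (by simp [hx, hxl])
  obtain ⟨d, hd⟩ := hD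
  set D : Set Box := {x | ((x ∈ lam ∧ x ∉ mu) ∨ (x ∈ mu ∧ x ∉ lam)) ∧
      ResBox κ x = ResBox κ d} with hDdef
  have hDfin : D.Finite := (hlam.union hmu).subset (by
    rintro x ⟨(⟨h, _⟩ | ⟨h, _⟩), _⟩
    · exact Or.inl h
    · exact Or.inr h)
  have hDne : D.Nonempty := ⟨d, hd, rfl⟩
  obtain ⟨b, hbD, hbmin⟩ := Set.exists_min_image D (key W) hDfin hDne
  have hboxb : IsBox ℓ b := by
    rcases hbD.1 with ⟨h, _⟩ | ⟨h, _⟩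
    · exact hbl _ h
    · exact hbm _ h
  have hminb : ∀ b' : Box, ((b' ∈ lam ∧ b' ∉ mu) ∨ (b' ∈ mu ∧ b' ∉ lam)) →
      ResBox κ b' = ResBox κ b → ¬ ThetaGT W b' b := by
    intro b' hb' hres hgt
    have hb'D : b' ∈ D := ⟨hb', by rw [hres, hbD.2]⟩
    have := hbmin b' hb'D
    exact absurd ((thetaGT_iff W b' b).1 hgt) (not_lt.2 this)
  rcases hbD.1 with ⟨hbl', hbm'⟩ | ⟨hbm', hbl'⟩
  · exact dom_absurd κ W hmu h2 hbl' hbm' (by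
      intro b' hb' hres hgt
      exact hminb b' (hb'.symm) hres hgt)
  · exact dom_absurd κ W hlam h1 hbm' hbl' hminb

lemma diagram_isBox {n : ℕ} (lam : Multipartition ℓ n) :
    ∀ b ∈ diagram lam.part, IsBox ℓ b := by
  rintro ⟨r, c, m⟩ ⟨h1, h2⟩
  simp only at h1 h2
  have hz : ¬ (m < 1 ∨ (ℓ : ℤ) < m ∨ r < 1) := by
    intro h
    rw [lam.supp m r h] at h2
    simp at h2
    omega
  push_neg at hz
  exact ⟨hz.2.2, h1, hz.1, le_of_not_gt (fun h => hz.2.1.not_gt h)⟩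

lemma multipartition_ext {n : ℕ} {lam mu : Multipartition ℓ n}
    (h : diagram lam.part = diagram mu.part) : lam = mu := by
  have hp : lam.part = mu.part := by
    funext m r
    have key : ∀ p q : ℤ → ℤ → ℕ, diagram p = diagram q → p m r ≤ q m r := by
      intro p q hpq
      rcases Nat.eq_zero_or_pos (p m r) with h0 | h0
      · omega
      · have hmem : ((r, ((p m r : ℤ)), m) : Box) ∈ diagram p := by
          refine ⟨?_, le_refl _⟩
          show (1 : ℤ) ≤ (p m r : ℤ)
          exact_mod_cast h0
        rw [hpq] at hmem
        have h2 : (p m r : ℤ) ≤ (q m r : ℤ) := hmem.2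
        exact_mod_cast h2
    exact le_antisymm (key _ _ h) (key _ _ h.symm)
  cases lam; cases mu
  simp only at hp
  subst hp
  rfl

end DomAux

/-- `⊵_θ` is a partial order on `n`-element finite sets of boxes, and in
particular restricts to a partial order on `ℓ`-multipartitions of `n`. -/
theorem dominance_partial_order (ℓ n e : ℕ) (hℓ : 1 ≤ ℓ) (hn : 1 ≤ n) (he : 2 ≤ e)
    (W : Weighting ℓ) (κ : ℤ → ZMod e) :
    (∀ lam : Finset Box, (∀ b ∈ lam, IsBox ℓ b) → lam.card = n →
      DominatesS W κ (↑lam) (↑lam)) ∧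
    (∀ lam mu nu : Finset Box,
      (∀ b ∈ lam, IsBox ℓ b) → (∀ b ∈ mu, IsBox ℓ b) → (∀ b ∈ nu, IsBox ℓ b) →
      lam.card = n → mu.card = n → nu.card = n →
      DominatesS W κ (↑lam) (↑mu) → DominatesS W κ (↑mu) (↑nu) →
      DominatesS W κ (↑lam) (↑nu)) ∧
    (∀ lam mu : Finset Box,
      (∀ b ∈ lam, IsBox ℓ b) → (∀ b ∈ mu, IsBox ℓ b) →
      lam.card = n → mu.card = n →
      DominatesS W κ (↑lam) (↑mu) → DominatesS W κ (↑mu) (↑lam) → lam = mu) ∧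
    (∀ lam : Multipartition ℓ n, DomGE W κ lam lam) ∧
    (∀ lam mu nu : Multipartition ℓ n,
      DomGE W κ lam mu → DomGE W κ mu nu → DomGE W κ lam nu) ∧
    (∀ lam mu : Multipartition ℓ n,
      DomGE W κ lam mu → DomGE W κ mu lam → lam = mu) := by
  refine ⟨?_, ?_, ?_, ?_, ?_, ?_⟩
  · intro lam _ _ b _
    exact le_refl _
  · intro lam mu nu hbl hbm hbn _ _ _ hd1 hd2 b hb
    calc ({b' ∈ (↑nu : Set Box) | ResBox κ b' = ResBox κ b ∧ (b' = b ∨ ThetaGT W b' b)}).ncard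
        ≤ ({b' ∈ (↑mu : Set Box) | ResBox κ b' = ResBox κ b ∧ (b' = b ∨ ThetaGT W b' b)}).ncard :=
          hd2 b hb
      _ ≤ _ := DomAux.dom_all κ W lam.finite_toSet mu.finite_toSet hbm hd1 b
  · intro lam mu hbl hbm _ _ hd1 hd2
    exact Finset.coe_injective
      (DomAux.dom_antisymm κ W lam.finite_toSet mu.finite_toSet hbl hbm hd1 hd2)
  · intro lam b _
    exact le_refl _
  · intro lam mu nu hd1 hd2 b hb
    calc ({b' ∈ diagram nu.part | ResBox κ b' = ResBox κ b ∧ (b' = b ∨ ThetaGT W b' b)}).ncard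
        ≤ ({b' ∈ diagram mu.part | ResBox κ b' = ResBox κ b ∧ (b' = b ∨ ThetaGT W b' b)}).ncard :=
          hd2 b hb
      _ ≤ _ := DomAux.dom_all κ W lam.finite mu.finite (DomAux.diagram_isBox mu) hd1 b
  · intro lam mu hd1 hd2
    exact DomAux.multipartition_ext
      (DomAux.dom_antisymm κ W lam.finite mu.finite
        (DomAux.diagram_isBox lam) (DomAux.diagram_isBox mu) hd1 hd2)
end

section
/- Call a weighting θ asymptotic if θ_{i+1} − θ_i > n for all 1 ≤ i ≤ ℓ−1. Let θ be an asymptotic weighting, e ≥ 2 and κ ∈ (ℤ/eℤ)^ℓ. If λ and μ are ℓ-multipartitions of n with λ ⊵_θ μ, then for all 1 ≤ k ≤ ℓ and all j ≥ 1: Σ_{i=1}^{k−1}|λ^(i)| + Σ_{i=1}^{j} λ^(k)_i ≥ Σ_{i=1}^{k−1}|μ^(i)| + Σ_{i=1}^{j} μ^(k)_i. -/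
namespace AsymAux
open Finset

section OrderLemmas

variable {ℓ : ℕ} (W : Weighting ℓ)

/-- The loading value (without `ε`) of a box. -/
def val (b : Box) : ℚ := W.θ b.2.2 + (b.1 : ℚ) - (b.2.1 : ℚ)

lemma thetaGT_iff (b b' : Box) :
    ThetaGT W b b' ↔ (val W b < val W b' ∨ (val W b = val W b' ∧ b.1 + b.2.1 < b'.1 + b'.2.1)) :=
  Iff.rfl

lemma thetaGT_trans {a b c : Box} (h1 : ThetaGT W a b) (h2 : ThetaGT W b c) :
    ThetaGT W a c := by
  rcases h1 with h1 | ⟨h1, h1'⟩ <;> rcases h2 with h2 | ⟨h2, h2'⟩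
  · exact Or.inl (lt_trans h1 h2)
  · exact Or.inl (h2 ▸ h1)
  · exact Or.inl (h1 ▸ h2)
  · exact Or.inr ⟨h1.trans h2, lt_trans h1' h2'⟩

lemma thetaGT_asymm {a b : Box} (h1 : ThetaGT W a b) (h2 : ThetaGT W b a) : False := by
  rcases h1 with h1 | ⟨h1, h1'⟩ <;> rcases h2 with h2 | ⟨h2, h2'⟩ <;> first
    | exact absurd (lt_trans h1 h2) (lt_irrefl _)
    | exact absurd (h2 ▸ h1) (lt_irrefl _)
    | exact absurd (h1 ▸ h2) (lt_irrefl _)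
    | exact absurd (lt_trans h1' h2') (lt_irrefl _)

/-- `a ⊵ b` -/
def GEb (a b : Box) : Prop := a = b ∨ ThetaGT W a b

lemma geb_trans {a b c : Box} (h1 : GEb W a b) (h2 : GEb W b c) : GEb W a c := by
  rcases h1 with rfl | h1
  · exact h2
  · rcases h2 with rfl | h2
    · exact Or.inr h1
    · exact Or.inr (thetaGT_trans W h1 h2)

/-- valid box: component within range -/
def ValidC (b : Box) : Prop := 1 ≤ b.2.2 ∧ b.2.2 ≤ (ℓ : ℤ)

lemma box_eq_of_val_eq {a b : Box} (ha : ValidC (ℓ := ℓ) a) (hb : ValidC (ℓ := ℓ) b)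
    (hval : val W a = val W b) (hsum : a.1 + a.2.1 = b.1 + b.2.1) : a = b := by
  obtain ⟨ra, ca, ma⟩ := a
  obtain ⟨rb, cb, mb⟩ := b
  simp only [val] at hval
  simp only [ValidC] at ha hb
  simp only at hsum ⊢
  have hm : ma = mb := by
    by_contra hne
    refine W.sep ma mb ha.1 ha.2 hb.1 hb.2 hne ((rb : ℤ) - cb - ra + ca) ?_
    push_cast
    linarith
  subst hm
  have hdc : (ra : ℚ) - ca = (rb : ℚ) - cb := by linarith
  have h1 : ra - ca = rb - cb := by exact_mod_cast hdc
  have h2 : ra = rb := by omega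
  subst h2
  have h3 : ca = cb := by omega
  subst h3
  rfl

/-- sorting key -/
def key (b : Box) : ℚ ×ₗ ℤ := toLex (val W b, b.1 + b.2.1)

lemma thetaGT_iff_key_lt (a b : Box) : ThetaGT W a b ↔ key W a < key W b := by
  rw [key, key, Prod.Lex.lt_iff]
  exact Iff.rfl

lemma geb_of_key_le {a b : Box} (ha : ValidC (ℓ := ℓ) a) (hb : ValidC (ℓ := ℓ) b)
    (h : key W a ≤ key W b) : GEb W a b := by
  rcases lt_or_eq_of_le h with h | h
  · exact Or.inr ((thetaGT_iff_key_lt W a b).2 h)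
  · left
    have h' : (val W a, a.1 + a.2.1) = (val W b, b.1 + b.2.1) := by
      exact_mod_cast congrArg ofLex h
    exact box_eq_of_val_eq W ha hb (congrArg Prod.fst h') (congrArg Prod.snd h')

lemma key_le_of_geb {a b : Box} (h : GEb W a b) : key W a ≤ key W b := by
  rcases h with rfl | h
  · exact le_refl _
  · exact le_of_lt ((thetaGT_iff_key_lt W a b).1 h)

end OrderLemmas

section MultipartitionLemmas

variable {ℓ n : ℕ} (M : Multipartition ℓ n)

lemma part_mono {m r r' : ℤ} (h1 : 1 ≤ r) (h2 : r ≤ r') : M.part m r' ≤ M.part m r := by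
  have key : ∀ d : ℕ, M.part m (r + d) ≤ M.part m r := by
    intro d
    induction d with
    | zero => simp
    | succ d ih =>
      have h := M.decr m (r + d) (by omega)
      have he : r + ((d + 1 : ℕ) : ℤ) = r + d + 1 := by push_cast; ring
      rw [he]
      exact le_trans h ih
  have he : r' = r + ((r' - r).toNat : ℤ) := by omega
  rw [he]
  exact key _

lemma part_pos_bounds {m r : ℤ} (h : 1 ≤ M.part m r) :
    1 ≤ m ∧ m ≤ (ℓ : ℤ) ∧ 1 ≤ r := by
  by_contra hc
  have := M.supp m r (by omega)
  omega

lemma part_le_n (m r : ℤ) : M.part m r ≤ n := by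
  classical
  set rowF : Finset Box :=
    (Finset.Icc (1:ℤ) (M.part m r : ℤ)).image (fun c => (r, c, m)) with hrowF
  have hsub : ↑rowF ⊆ diagram M.part := by
    intro b hb
    simp only [hrowF, coe_image, Set.mem_image, Finset.mem_coe, Finset.mem_Icc] at hb
    obtain ⟨c, ⟨hc1, hc2⟩, rfl⟩ := hb
    exact ⟨hc1, hc2⟩
  have hinj : Function.Injective (fun c : ℤ => ((r, c, m) : Box)) := by
    intro a b h; simpa using h
  have hcard : rowF.card = M.part m r := by
    rw [hrowF, Finset.card_image_of_injective _ hinj, Int.card_Icc]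
    simp
  calc M.part m r = (↑rowF : Set Box).ncard := by
        rw [Set.ncard_coe_finset, hcard]
    _ ≤ (diagram M.part).ncard := Set.ncard_le_ncard hsub M.finite
    _ = n := M.size

lemma row_le_n {m r : ℤ} (h : 1 ≤ M.part m r) : r ≤ (n : ℤ) := by
  classical
  have hr1 : 1 ≤ r := (part_pos_bounds M h).2.2
  set colF : Finset Box :=
    (Finset.Icc (1:ℤ) r).image (fun r' => (r', 1, m)) with hcolF
  have hsub : ↑colF ⊆ diagram M.part := by
    intro b hb
    simp only [hcolF, coe_image, Set.mem_image, Finset.mem_coe, Finset.mem_Icc] at hb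
    obtain ⟨r', ⟨ha1, ha2⟩, rfl⟩ := hb
    refine ⟨le_refl _, ?_⟩
    have h2 := part_mono M (m := m) ha1 ha2
    show (1:ℤ) ≤ (M.part m r' : ℤ)
    omega
  have hinj : Function.Injective (fun r' : ℤ => ((r', 1, m) : Box)) := by
    intro a b h; simpa using h
  have hcard : colF.card = r.toNat := by
    rw [hcolF, Finset.card_image_of_injective _ hinj, Int.card_Icc]
    congr 1; omega
  have : r.toNat ≤ n := by
    calc r.toNat = (↑colF : Set Box).ncard := by rw [Set.ncard_coe_finset, hcard]
      _ ≤ (diagram M.part).ncard := Set.ncard_le_ncard hsub M.finite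
      _ = n := M.size
  omega

lemma part_eq_zero_of_gt {m r : ℤ} (h : (n : ℤ) < r) : M.part m r = 0 := by
  by_contra hc
  have := row_le_n M (m := m) (r := r) (by omega)
  omega

/-- the diagram as a Finset -/
noncomputable def Fd : Finset Box :=
  ((Finset.Icc (1:ℤ) (n:ℤ)) ×ˢ (Finset.Icc (1:ℤ) (n:ℤ)) ×ˢ (Finset.Icc (1:ℤ) (ℓ:ℤ))).filter
    (fun b => b.2.1 ≤ (M.part b.2.2 b.1 : ℤ))

lemma mem_Fd {b : Box} : b ∈ Fd M ↔ b ∈ diagram M.part := by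
  obtain ⟨r, c, m⟩ := b
  simp only [Fd, Finset.mem_filter, Finset.mem_product, Finset.mem_Icc, diagram,
    Set.mem_setOf_eq]
  constructor
  · rintro ⟨⟨hr, hc, hm⟩, hle⟩
    exact ⟨hc.1, hle⟩
  · rintro ⟨hc1, hc2⟩
    have hpos : 1 ≤ M.part m r := by omega
    obtain ⟨hm1, hm2, hr1⟩ := part_pos_bounds M hpos
    have hrn := row_le_n M hpos
    have hpn := part_le_n M m r
    exact ⟨⟨⟨hr1, hrn⟩, ⟨hc1, by omega⟩, ⟨hm1, hm2⟩⟩, hc2⟩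

lemma mem_Fd_bounds {b : Box} (h : b ∈ Fd M) :
    1 ≤ b.1 ∧ b.1 ≤ (n:ℤ) ∧ 1 ≤ b.2.1 ∧ b.2.1 ≤ (n:ℤ) ∧ 1 ≤ b.2.2 ∧ b.2.2 ≤ (ℓ:ℤ)
      ∧ b.2.1 ≤ (M.part b.2.2 b.1 : ℤ) := by
  simp only [Fd, Finset.mem_filter, Finset.mem_product, Finset.mem_Icc] at h
  exact ⟨h.1.1.1, h.1.1.2, h.1.2.1.1, h.1.2.1.2, h.1.2.2.1, h.1.2.2.2, h.2⟩

lemma coe_Fd : (↑(Fd M) : Set Box) = diagram M.part := by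
  ext b; rw [Finset.mem_coe, mem_Fd]

lemma card_Fd : (Fd M).card = n := by
  rw [← Set.ncard_coe_finset, coe_Fd, M.size]

/-- generic fiberwise counting over boxes -/
lemma card_box_filter (N L : ℤ) (P : Box → Prop) [DecidablePred P] :
    ((((Finset.Icc (1:ℤ) N)) ×ˢ ((Finset.Icc (1:ℤ) N)) ×ˢ ((Finset.Icc (1:ℤ) L))).filter P).card
      = ∑ m ∈ Finset.Icc (1:ℤ) L, ∑ r ∈ Finset.Icc (1:ℤ) N,
          ((Finset.Icc (1:ℤ) N).filter (fun c => P (r, c, m))).card := by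
  classical
  rw [Finset.card_eq_sum_card_fiberwise
      (f := fun b : Box => (b.2.2, b.1))
      (t := (Finset.Icc (1:ℤ) L) ×ˢ (Finset.Icc (1:ℤ) N))
      (fun x hx => by
        simp only [Finset.mem_coe, Finset.mem_filter, Finset.mem_product] at hx
        exact Finset.mem_product.2 ⟨hx.1.2.2, hx.1.1⟩)]
  rw [Finset.sum_product]
  refine Finset.sum_congr rfl (fun m hm => Finset.sum_congr rfl (fun r hr => ?_))
  rw [Finset.mem_Icc] at hm hr
  have himage :
      ((((Finset.Icc (1:ℤ) N)) ×ˢ ((Finset.Icc (1:ℤ) N)) ×ˢ ((Finset.Icc (1:ℤ) L))).filter P).filter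
        (fun b => (b.2.2, b.1) = (m, r))
      = ((Finset.Icc (1:ℤ) N).filter (fun c => P (r, c, m))).image (fun c => (r, c, m)) := by
    ext ⟨r', c', m'⟩
    simp only [Finset.mem_filter, Finset.mem_product, Finset.mem_image, Finset.mem_Icc,
      Prod.mk.injEq]
    constructor
    · rintro ⟨⟨⟨hr', hc', hm'⟩, hP⟩, hmm, hrr⟩
      exact ⟨c', ⟨⟨hc'.1, hc'.2⟩, by rw [← hrr, ← hmm]; exact hP⟩, hrr.symm, rfl, hmm.symm⟩
    · rintro ⟨c, ⟨⟨hc1, hc2⟩, hP⟩, rfl, rfl, rfl⟩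
      exact ⟨⟨⟨⟨hr.1, hr.2⟩, ⟨hc1, hc2⟩, ⟨hm.1, hm.2⟩⟩, hP⟩, rfl, rfl⟩
  rw [himage, Finset.card_image_of_injective _ (fun a b h => by simpa using h)]

lemma card_filter_le_icc {N : ℤ} (p : ℕ) (hp : (p : ℤ) ≤ N) :
    ((Finset.Icc (1:ℤ) N).filter (fun c => c ≤ (p : ℤ))).card = p := by
  have h : (Finset.Icc (1:ℤ) N).filter (fun c => c ≤ (p : ℤ)) = Finset.Icc (1:ℤ) (p:ℤ) := by
    ext c
    simp only [Finset.mem_filter, Finset.mem_Icc]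
    omega
  rw [h, Int.card_Icc]
  omega

lemma size_eq : n = ∑ m ∈ Finset.Icc (1:ℤ) (ℓ:ℤ), ∑ r ∈ Finset.Icc (1:ℤ) (n:ℤ), M.part m r := by
  classical
  have h := card_Fd M
  rw [Fd, card_box_filter] at h
  refine Eq.trans h.symm (Finset.sum_congr rfl (fun m hm => Finset.sum_congr rfl (fun r hr => ?_)))
  dsimp only
  exact card_filter_le_icc _ (by exact_mod_cast part_le_n M m r)

/-- number of rows is at most the component size -/
lemma col_le_sum {m r : ℤ} (h : 1 ≤ M.part m r) :
    r ≤ (∑ r' ∈ Finset.Icc (1:ℤ) (n:ℤ), (M.part m r' : ℤ)) := by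
  have hr1 : 1 ≤ r := (part_pos_bounds M h).2.2
  have hrn : r ≤ (n:ℤ) := row_le_n M h
  calc r = ∑ r' ∈ Finset.Icc (1:ℤ) r, (1:ℤ) := by
        rw [Finset.sum_const, Int.card_Icc]; simp; omega
    _ ≤ ∑ r' ∈ Finset.Icc (1:ℤ) r, (M.part m r' : ℤ) := by
        refine Finset.sum_le_sum (fun i hi => ?_)
        rw [Finset.mem_Icc] at hi
        have := part_mono M (m := m) hi.1 (le_trans hi.2 (le_refl r))
        omega
    _ ≤ ∑ r' ∈ Finset.Icc (1:ℤ) (n:ℤ), (M.part m r' : ℤ) := by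
        refine Finset.sum_le_sum_of_subset_of_nonneg ?_ (fun i _ _ => by positivity)
        exact Finset.Icc_subset_Icc (le_refl _) hrn

end MultipartitionLemmas

section SumLemmas

lemma sum_Icc_split (f : ℤ → ℕ) {k : ℤ} (h1 : 1 ≤ k) :
    ∑ m ∈ Finset.Icc (1:ℤ) k, f m = (∑ m ∈ Finset.Icc (1:ℤ) (k-1), f m) + f k := by
  have h : Finset.Icc (1:ℤ) k = insert k (Finset.Icc (1:ℤ) (k-1)) := by
    ext x; simp only [Finset.mem_Icc, Finset.mem_insert]; omega
  rw [h, Finset.sum_insert (by simp only [Finset.mem_Icc]; omega)]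
  omega

lemma sum_Icc_split_three (f : ℤ → ℕ) {k L : ℤ} (h1 : 1 ≤ k) (h2 : k ≤ L) :
    ∑ m ∈ Finset.Icc (1:ℤ) L, f m
      = ((∑ m ∈ Finset.Icc (1:ℤ) (k-1), f m) + f k) + ∑ m ∈ Finset.Icc (k+1) L, f m := by
  rw [← sum_Icc_split f h1]
  have h : Finset.Icc (1:ℤ) L = Finset.Icc (1:ℤ) k ∪ Finset.Icc (k+1) L := by
    ext x; simp only [Finset.mem_Icc, Finset.mem_union]; omega
  rw [h, Finset.sum_union]
  rw [Finset.disjoint_left]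
  intro a ha hb
  rw [Finset.mem_Icc] at ha hb
  omega

end SumLemmas

end AsymAux

/-- for an asymptotic weighting, `θ`-dominance implies the classical
dominance on partial sums. -/
theorem asymptotic_dominance (ℓ n e : ℕ) (hℓ : 1 ≤ ℓ) (hn : 1 ≤ n) (he : 2 ≤ e)
    (W : Weighting ℓ)
    (hasym : ∀ i : ℤ, 1 ≤ i → i + 1 ≤ (ℓ : ℤ) → (n : ℚ) < W.θ (i + 1) - W.θ i)
    (κ : ℤ → ZMod e) (lam mu : Multipartition ℓ n)
    (hdom : DomGE W κ lam mu) :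
    ∀ k : ℤ, 1 ≤ k → k ≤ (ℓ : ℤ) → ∀ j : ℤ, 1 ≤ j →
      ((∑ i ∈ Finset.Icc (1 : ℤ) (k - 1), ∑ r ∈ Finset.Icc (1 : ℤ) (n : ℤ), mu.part i r) +
          ∑ i ∈ Finset.Icc (1 : ℤ) j, mu.part k i) ≤
        ((∑ i ∈ Finset.Icc (1 : ℤ) (k - 1), ∑ r ∈ Finset.Icc (1 : ℤ) (n : ℤ), lam.part i r) +
          ∑ i ∈ Finset.Icc (1 : ℤ) j, lam.part k i) := by
  classical
  haveI : NeZero e := ⟨by omega⟩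
  -- telescoping estimate for the weighting
  have htel : ∀ m : ℤ, 1 ≤ m → ∀ k' : ℤ, m + 1 ≤ k' → k' ≤ (ℓ:ℤ) →
      (n:ℚ) * ((k' : ℚ) - (m:ℚ)) < W.θ k' - W.θ m := by
    intro m hm
    have H : ∀ k' : ℤ, m + 1 ≤ k' →
        (k' ≤ (ℓ:ℤ) → (n:ℚ) * ((k' : ℚ) - (m:ℚ)) < W.θ k' - W.θ m) := by
      refine Int.le_induction ?_ ?_
      · intro hle
        have h := hasym m hm hle
        push_cast
        linarith
      · intro i hi ih hle
        have h1 := hasym i (by omega) (by omega)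
        have h2 := ih (by omega)
        push_cast at h2 ⊢
        linarith
    exact fun k' h1 h2 => H k' h1 h2
  intro k hk1 hkl j hj1
  by_contra hfail0
  push_neg at hfail0
  -- the failing set is nonempty after clipping j into [1, n]
  have hclip : ∀ (M : Multipartition ℓ n) (k' : ℤ),
      ∑ i ∈ Finset.Icc (1:ℤ) (min j (n:ℤ)), M.part k' i
        = ∑ i ∈ Finset.Icc (1:ℤ) j, M.part k' i := by
    intro M k'
    refine Finset.sum_subset (Finset.Icc_subset_Icc (le_refl _) (min_le_left _ _)) ?_
    intro x hx hnx
    rw [Finset.mem_Icc] at hx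
    rw [Finset.mem_Icc] at hnx
    exact AsymAux.part_eq_zero_of_gt M (by omega)
  -- minimal failing component k0
  obtain ⟨k0, hk0mem, hk0min⟩ := Finset.exists_min_image
    ((Finset.Icc (1:ℤ) (ℓ:ℤ)).filter (fun k' => ∃ j' ∈ Finset.Icc (1:ℤ) (n:ℤ),
      ((∑ i ∈ Finset.Icc (1 : ℤ) (k' - 1), ∑ r ∈ Finset.Icc (1 : ℤ) (n : ℤ), lam.part i r) +
          ∑ i ∈ Finset.Icc (1 : ℤ) j', lam.part k' i)
        < ((∑ i ∈ Finset.Icc (1 : ℤ) (k' - 1), ∑ r ∈ Finset.Icc (1 : ℤ) (n : ℤ), mu.part i r) +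
          ∑ i ∈ Finset.Icc (1 : ℤ) j', mu.part k' i))) (fun x => x)
    ⟨k, by
      rw [Finset.mem_filter, Finset.mem_Icc]
      refine ⟨⟨hk1, hkl⟩, min j (n:ℤ), ?_, ?_⟩
      · rw [Finset.mem_Icc]
        constructor
        · have : (1:ℤ) ≤ (n:ℤ) := by exact_mod_cast hn
          omega
        · omega
      · rw [hclip lam k, hclip mu k]
        omega⟩
  rw [Finset.mem_filter, Finset.mem_Icc] at hk0mem
  obtain ⟨⟨hk01, hk0l⟩, hk0ex⟩ := hk0mem
  -- minimal failing row j0 for component k0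
  obtain ⟨j0, hj0mem, hj0min⟩ := Finset.exists_min_image
    ((Finset.Icc (1:ℤ) (n:ℤ)).filter (fun j' =>
      ((∑ i ∈ Finset.Icc (1 : ℤ) (k0 - 1), ∑ r ∈ Finset.Icc (1 : ℤ) (n : ℤ), lam.part i r) +
          ∑ i ∈ Finset.Icc (1 : ℤ) j', lam.part k0 i)
        < ((∑ i ∈ Finset.Icc (1 : ℤ) (k0 - 1), ∑ r ∈ Finset.Icc (1 : ℤ) (n : ℤ), mu.part i r) +
          ∑ i ∈ Finset.Icc (1 : ℤ) j', mu.part k0 i))) (fun x => x)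
    (by
      obtain ⟨j', hj'mem, hj'⟩ := hk0ex
      exact ⟨j', Finset.mem_filter.2 ⟨hj'mem, hj'⟩⟩)
  rw [Finset.mem_filter, Finset.mem_Icc] at hj0mem
  obtain ⟨⟨hj01, hj0n⟩, hFkj⟩ := hj0mem
  -- abbreviations
  set SA : ℕ := ∑ i ∈ Finset.Icc (1 : ℤ) (k0 - 1), ∑ r ∈ Finset.Icc (1 : ℤ) (n : ℤ), lam.part i r
    with hSA
  set SB : ℕ := ∑ i ∈ Finset.Icc (1 : ℤ) (k0 - 1), ∑ r ∈ Finset.Icc (1 : ℤ) (n : ℤ), mu.part i r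
    with hSB
  -- minimality: previous partial sums do not fail
  have hMF : SB + ∑ i ∈ Finset.Icc (1:ℤ) (j0-1), mu.part k0 i
      ≤ SA + ∑ i ∈ Finset.Icc (1:ℤ) (j0-1), lam.part k0 i := by
    rcases lt_or_ge (j0 - 1) 1 with hj2 | hj2
    · -- j0 = 1 : sums over Icc 1 0 vanish; need SB ≤ SA
      have hj0e : j0 = 1 := by omega
      rw [hj0e]
      norm_num
      rcases lt_or_ge (k0 - 1) 1 with hk2 | hk2
      · -- k0 = 1 : both zero
        have hk0e : k0 = 1 := by omega
        rw [hSA, hSB, hk0e]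
        norm_num
      · -- k0 ≥ 2 : use minimality of k0 at component k0 - 1 with j' = n
        by_contra hcon
        push_neg at hcon
        have hsplitL := AsymAux.sum_Icc_split
          (fun m => ∑ r ∈ Finset.Icc (1 : ℤ) (n : ℤ), lam.part m r) hk2
        have hsplitM := AsymAux.sum_Icc_split
          (fun m => ∑ r ∈ Finset.Icc (1 : ℤ) (n : ℤ), mu.part m r) hk2
        have hfailprev :
            ((∑ i ∈ Finset.Icc (1 : ℤ) (k0 - 1 - 1), ∑ r ∈ Finset.Icc (1 : ℤ) (n : ℤ), lam.part i r) +
              ∑ i ∈ Finset.Icc (1 : ℤ) (n:ℤ), lam.part (k0-1) i)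
            < ((∑ i ∈ Finset.Icc (1 : ℤ) (k0 - 1 - 1), ∑ r ∈ Finset.Icc (1 : ℤ) (n : ℤ), mu.part i r) +
              ∑ i ∈ Finset.Icc (1 : ℤ) (n:ℤ), mu.part (k0-1) i) := by
          omega
        have := hk0min (k0 - 1) (by
          rw [Finset.mem_filter, Finset.mem_Icc]
          exact ⟨⟨by omega, by omega⟩, (n:ℤ), by rw [Finset.mem_Icc]; constructor <;> omega, hfailprev⟩)
        omega
    · -- j0 ≥ 2 : use minimality of j0
      by_contra hcon
      push_neg at hcon
      have := hj0min (j0 - 1) (by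
        rw [Finset.mem_filter, Finset.mem_Icc]
        exact ⟨⟨by omega, by omega⟩, hcon⟩)
      omega
  -- the discrepancy row
  have hrow : lam.part k0 j0 < mu.part k0 j0 := by
    have hsl := AsymAux.sum_Icc_split (fun i => lam.part k0 i) hj01
    have hsm := AsymAux.sum_Icc_split (fun i => mu.part k0 i) hj01
    omega
  -- witness box
  set bb : ℕ := lam.part k0 j0 with hbb
  set t : ℤ := j0 - bb - 1 with ht
  set xstar : Box := (j0, (bb:ℤ)+1, k0) with hxstar
  have hxdiag : xstar ∈ diagram mu.part := by
    constructor
    · show (1:ℤ) ≤ (bb:ℤ)+1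
      omega
    · show (bb:ℤ)+1 ≤ (mu.part k0 j0 : ℤ)
      omega
  -- row monotonicity facts
  have hlamrow_ge : ∀ r : ℤ, 1 ≤ r → r ≤ j0 → bb ≤ lam.part k0 r := fun r h1 h2 =>
    AsymAux.part_mono lam (m := k0) h1 h2
  have hlamrow_le : ∀ r : ℤ, j0 ≤ r → lam.part k0 r ≤ bb := fun r h2 =>
    AsymAux.part_mono lam (m := k0) hj01 h2
  have hmurow_ge : ∀ r : ℤ, 1 ≤ r → r ≤ j0 → bb + 1 ≤ mu.part k0 r := by
    intro r h1 h2
    have := AsymAux.part_mono mu (m := k0) h1 h2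
    omega
  -- sum bounds
  have hSlk0 : (∑ i ∈ Finset.Icc (1:ℤ) (j0-1), lam.part k0 i) + bb
      ≤ ∑ r ∈ Finset.Icc (1:ℤ) (n:ℤ), lam.part k0 r := by
    have h1 := AsymAux.sum_Icc_split (fun i => lam.part k0 i) hj01
    have h2 : ∑ i ∈ Finset.Icc (1:ℤ) j0, lam.part k0 i
        ≤ ∑ r ∈ Finset.Icc (1:ℤ) (n:ℤ), lam.part k0 r :=
      Finset.sum_le_sum_of_subset (Finset.Icc_subset_Icc (le_refl _) hj0n)
    omega
  have hSmk0 : (∑ i ∈ Finset.Icc (1:ℤ) (j0-1), mu.part k0 i) + mu.part k0 j0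
      ≤ ∑ r ∈ Finset.Icc (1:ℤ) (n:ℤ), mu.part k0 r := by
    have h1 := AsymAux.sum_Icc_split (fun i => mu.part k0 i) hj01
    have h2 : ∑ i ∈ Finset.Icc (1:ℤ) j0, mu.part k0 i
        ≤ ∑ r ∈ Finset.Icc (1:ℤ) (n:ℤ), mu.part k0 r :=
      Finset.sum_le_sum_of_subset (Finset.Icc_subset_Icc (le_refl _) hj0n)
    omega
  have hPm1 : (j0-1).toNat ≤ ∑ i ∈ Finset.Icc (1:ℤ) (j0-1), mu.part k0 i := by
    have hcard : (Finset.Icc (1:ℤ) (j0-1)).card = (j0-1).toNat := by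
      rw [Int.card_Icc]; congr 1; omega
    calc (j0-1).toNat = (Finset.Icc (1:ℤ) (j0-1)).card • 1 := by
          rw [hcard, smul_eq_mul, mul_one]
      _ ≤ ∑ i ∈ Finset.Icc (1:ℤ) (j0-1), mu.part k0 i :=
        Finset.card_nsmul_le_sum _ _ _ (fun i hi => by
          rw [Finset.mem_Icc] at hi
          have := hmurow_ge i hi.1 (by omega)
          omega)
  have hpairM : ∀ m : ℤ, 1 ≤ m → m ≤ (ℓ:ℤ) → m ≠ k0 →
      (∑ r ∈ Finset.Icc (1:ℤ) (n:ℤ), mu.part m r)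
        + (∑ r ∈ Finset.Icc (1:ℤ) (n:ℤ), mu.part k0 r) ≤ n := by
    intro m hm1 hm2 hne
    have hsub : ({m, k0} : Finset ℤ) ⊆ Finset.Icc 1 (ℓ:ℤ) := by
      intro x hx
      rw [Finset.mem_insert, Finset.mem_singleton] at hx
      rw [Finset.mem_Icc]
      rcases hx with rfl | rfl
      · exact ⟨hm1, hm2⟩
      · exact ⟨hk01, hk0l⟩
    calc (∑ r ∈ Finset.Icc (1:ℤ) (n:ℤ), mu.part m r)
          + (∑ r ∈ Finset.Icc (1:ℤ) (n:ℤ), mu.part k0 r)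
        = ∑ m' ∈ ({m, k0} : Finset ℤ), ∑ r ∈ Finset.Icc (1:ℤ) (n:ℤ), mu.part m' r :=
          (Finset.sum_pair (f := fun m' => ∑ r ∈ Finset.Icc (1:ℤ) (n:ℤ), mu.part m' r) hne).symm
      _ ≤ ∑ m' ∈ Finset.Icc 1 (ℓ:ℤ), ∑ r ∈ Finset.Icc (1:ℤ) (n:ℤ), mu.part m' r :=
          Finset.sum_le_sum_of_subset hsub
      _ = n := (AsymAux.size_eq mu).symm
  have htripleL : ∀ m : ℤ, k0 < m → m ≤ (ℓ:ℤ) →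
      SA + (∑ r ∈ Finset.Icc (1:ℤ) (n:ℤ), lam.part k0 r)
        + (∑ r ∈ Finset.Icc (1:ℤ) (n:ℤ), lam.part m r) ≤ n := by
    intro m hm1 hm2
    have hnotm : m ∉ Finset.Icc (1:ℤ) k0 := by rw [Finset.mem_Icc]; omega
    have hsub : insert m (Finset.Icc (1:ℤ) k0) ⊆ Finset.Icc 1 (ℓ:ℤ) := by
      intro x hx
      rw [Finset.mem_insert] at hx
      rw [Finset.mem_Icc]
      rcases hx with rfl | hx
      · omega
      · rw [Finset.mem_Icc] at hx; omega
    have hsplit := AsymAux.sum_Icc_split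
      (fun m' => ∑ r ∈ Finset.Icc (1:ℤ) (n:ℤ), lam.part m' r) hk01
    have hins := Finset.sum_insert
      (f := fun m' => ∑ r ∈ Finset.Icc (1:ℤ) (n:ℤ), lam.part m' r) hnotm
    have hle : ∑ m' ∈ insert m (Finset.Icc (1:ℤ) k0),
          (∑ r ∈ Finset.Icc (1:ℤ) (n:ℤ), lam.part m' r)
        ≤ ∑ m' ∈ Finset.Icc 1 (ℓ:ℤ), ∑ r ∈ Finset.Icc (1:ℤ) (n:ℤ), lam.part m' r :=
      Finset.sum_le_sum_of_subset hsub
    have htot := (AsymAux.size_eq lam).symm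
    omega
  -- separation estimates
  have hGTsmall : ∀ w : Box, 1 ≤ w.2.2 → w.2.2 < k0 →
      (w.1 - w.2.1) - t ≤ (n:ℤ) - 1 → ThetaGT W w xstar := by
    rintro ⟨r, c, m⟩ hm1 hmk hnum
    simp only at hm1 hmk hnum
    left
    have h1 := htel m hm1 k0 (by omega) hk0l
    have h2 : (1:ℚ) ≤ (k0:ℚ) - (m:ℚ) := by
      have h : ((m + 1 : ℤ) : ℚ) ≤ ((k0 : ℤ) : ℚ) := by exact_mod_cast (by omega : m + 1 ≤ k0)
      push_cast at h
      linarith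
    have h3 : (n:ℚ) ≤ (n:ℚ) * ((k0:ℚ) - (m:ℚ)) := le_mul_of_one_le_right (by positivity) h2
    have h4 : ((r : ℚ) - c) - ((j0:ℚ) - ((bb:ℚ) + 1)) ≤ (n:ℚ) - 1 := by
      rw [ht] at hnum
      have h' : ((r - c - (j0 - (bb:ℤ) - 1) : ℤ) : ℚ) ≤ (((n:ℤ) - 1 : ℤ) : ℚ) := by
        exact_mod_cast hnum
      push_cast at h'
      linarith
    show W.θ m + (r:ℚ) - (c:ℚ) < W.θ xstar.2.2 + (xstar.1 : ℚ) - (xstar.2.1 : ℚ)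
    rw [hxstar]
    show W.θ m + (r:ℚ) - (c:ℚ) < W.θ k0 + ((j0 : ℤ):ℚ) - (((bb:ℤ) + 1 : ℤ) : ℚ)
    push_cast
    have hn1 : (1:ℚ) ≤ (n:ℚ) := by exact_mod_cast hn
    linarith
  have hGTbig : ∀ w : Box, w.2.2 ≤ (ℓ:ℤ) → k0 < w.2.2 →
      t - (w.1 - w.2.1) ≤ (n:ℤ) - 1 → ThetaGT W xstar w := by
    rintro ⟨r, c, m⟩ hml hmk hnum
    simp only at hml hmk hnum
    left
    have h1 := htel k0 hk01 m (by omega) hml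
    have h2 : (1:ℚ) ≤ (m:ℚ) - (k0:ℚ) := by
      have h : ((k0 + 1 : ℤ) : ℚ) ≤ ((m : ℤ) : ℚ) := by exact_mod_cast (by omega : k0 + 1 ≤ m)
      push_cast at h
      linarith
    have h3 : (n:ℚ) ≤ (n:ℚ) * ((m:ℚ) - (k0:ℚ)) := le_mul_of_one_le_right (by positivity) h2
    have h4 : ((j0:ℚ) - ((bb:ℚ) + 1)) - ((r : ℚ) - c) ≤ (n:ℚ) - 1 := by
      rw [ht] at hnum
      have h' : (((j0 - (bb:ℤ) - 1) - (r - c) : ℤ) : ℚ) ≤ (((n:ℤ) - 1 : ℤ) : ℚ) := by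
        exact_mod_cast hnum
      push_cast at h'
      linarith
    show W.θ xstar.2.2 + (xstar.1 : ℚ) - (xstar.2.1 : ℚ) < W.θ m + (r:ℚ) - (c:ℚ)
    rw [hxstar]
    show W.θ k0 + ((j0 : ℤ):ℚ) - (((bb:ℤ) + 1 : ℤ) : ℚ) < W.θ m + (r:ℚ) - (c:ℚ)
    push_cast
    have hn1 : (1:ℚ) ≤ (n:ℚ) := by exact_mod_cast hn
    linarith
  -- characterization of the dominating λ-boxes
  have hQlam : ∀ w ∈ AsymAux.Fd lam, AsymAux.GEb W w xstar →
      (w.2.2 < k0 ∨ (w.2.2 = k0 ∧ (w.1 - w.2.1 < t ∨ (w.1 - w.2.1 = t ∧ w.1 ≤ j0)))) := by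
    intro w hw hge
    obtain ⟨hr1, hrn, hc1, hcn, hm1, hml, hcp⟩ := AsymAux.mem_Fd_bounds lam hw
    rcases lt_trichotomy w.2.2 k0 with hlt | heq | hgt
    · exact Or.inl hlt
    · right
      refine ⟨heq, ?_⟩
      rcases hge with heq2 | hgt'
      · right
        rw [heq2, hxstar]
        constructor
        · show j0 - ((bb:ℤ)+1) = t
          omega
        · exact le_refl j0
      · rcases hgt' with hlt' | ⟨heq', hsum⟩
        · left
          rw [hxstar] at hlt'
          simp only [heq] at hlt'
          have h' : (w.1 : ℚ) - (w.2.1:ℚ) < ((j0:ℤ):ℚ) - (((bb:ℤ)+1 :ℤ):ℚ) := by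
            push_cast at hlt' ⊢
            linarith
          have h2 : (w.1 - w.2.1 : ℤ) < j0 - ((bb:ℤ)+1) := by exact_mod_cast h'
          omega
        · right
          rw [hxstar] at heq' hsum
          simp only [heq] at heq'
          have h' : (w.1 : ℚ) - (w.2.1:ℚ) = ((j0:ℤ):ℚ) - (((bb:ℤ)+1 :ℤ):ℚ) := by
            push_cast at heq' ⊢
            linarith
          have h2 : (w.1 - w.2.1 : ℤ) = j0 - ((bb:ℤ)+1) := by exact_mod_cast h'
          simp only at hsum
          omega
    · exfalso
      have hrsum : lam.part w.2.2 w.1 ≤ ∑ r ∈ Finset.Icc (1:ℤ) (n:ℤ), lam.part w.2.2 r :=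
        Finset.single_le_sum (fun i _ => Nat.zero_le _)
          (by rw [Finset.mem_Icc]; exact ⟨hr1, hrn⟩)
      have htri := htripleL w.2.2 hgt hml
      have hnum : t - (w.1 - w.2.1) ≤ (n:ℤ) - 1 := by omega
      have hgtx := hGTbig w hml hgt hnum
      rcases hge with heq2 | hgt'
      · rw [heq2, hxstar] at hgt
        simp only at hgt
        omega
      · exact AsymAux.thetaGT_asymm W hgt' hgtx
  -- characterization of the dominating μ-boxes
  have hQmu : ∀ w ∈ AsymAux.Fd mu,
      (w.2.2 < k0 ∨ (w.2.2 = k0 ∧ (w.1 - w.2.1 < t ∨ (w.1 - w.2.1 = t ∧ w.1 ≤ j0)))) →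
      AsymAux.GEb W w xstar := by
    intro w hw hq
    obtain ⟨hr1, hrn, hc1, hcn, hm1, hml, hcp⟩ := AsymAux.mem_Fd_bounds mu hw
    rcases hq with hlt | ⟨heq, hd⟩
    · refine Or.inr (hGTsmall w hm1 hlt ?_)
      have hcol := AsymAux.col_le_sum mu (m := w.2.2) (r := w.1) (by omega)
      rw [← Nat.cast_sum] at hcol
      have hpair := hpairM w.2.2 hm1 hml (by omega)
      omega
    · rcases hd with hdlt | ⟨hdeq, hrle⟩
      · refine Or.inr (Or.inl ?_)
        show W.θ w.2.2 + (w.1:ℚ) - (w.2.1:ℚ)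
            < W.θ xstar.2.2 + (xstar.1 : ℚ) - (xstar.2.1 : ℚ)
        rw [hxstar]
        show W.θ w.2.2 + (w.1:ℚ) - (w.2.1:ℚ) < W.θ k0 + ((j0:ℤ):ℚ) - (((bb:ℤ)+1 :ℤ):ℚ)
        rw [heq]
        have h' : ((w.1 - w.2.1 : ℤ) : ℚ) < ((j0 - (bb:ℤ) - 1 : ℤ):ℚ) := by
          exact_mod_cast (by omega : (w.1 - w.2.1 : ℤ) < j0 - (bb:ℤ) - 1)
        push_cast at h' ⊢
        linarith
      · rcases eq_or_lt_of_le hrle with hreq | hrlt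
        · left
          obtain ⟨wr, wc, wm⟩ := w
          simp only at heq hdeq hreq
          rw [hxstar]
          have hwc : wc = (bb:ℤ)+1 := by omega
          rw [heq, hwc, hreq]
        · right
          right
          constructor
          · show W.θ w.2.2 + (w.1:ℚ) - (w.2.1:ℚ)
                = W.θ xstar.2.2 + (xstar.1 : ℚ) - (xstar.2.1 : ℚ)
            rw [hxstar]
            show W.θ w.2.2 + (w.1:ℚ) - (w.2.1:ℚ) = W.θ k0 + ((j0:ℤ):ℚ) - (((bb:ℤ)+1 :ℤ):ℚ)
            rw [heq]
            have h' : ((w.1 - w.2.1 : ℤ) : ℚ) = ((j0 - (bb:ℤ) - 1 : ℤ):ℚ) := by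
              exact_mod_cast (by omega : (w.1 - w.2.1 : ℤ) = j0 - (bb:ℤ) - 1)
            push_cast at h' ⊢
            linarith
          · rw [hxstar]
            show w.1 + w.2.1 < j0 + ((bb:ℤ)+1)
            omega
  -- Step C : θ-dominance gives residue-free count domination at xstar
  have hC : ((AsymAux.Fd mu).filter (fun w => AsymAux.GEb W w xstar)).card
      ≤ ((AsymAux.Fd lam).filter (fun w => AsymAux.GEb W w xstar)).card := by
    rw [Finset.card_eq_sum_card_fiberwise (f := ResBox κ)
      (t := (Finset.univ : Finset (ZMod e))) (fun x _ => Finset.mem_univ _)]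
    rw [Finset.card_eq_sum_card_fiberwise (f := ResBox κ) (s := ((AsymAux.Fd lam).filter (fun w => AsymAux.GEb W w xstar)))
      (t := (Finset.univ : Finset (ZMod e))) (fun x _ => Finset.mem_univ _)]
    refine Finset.sum_le_sum (fun i _ => ?_)
    by_cases hne : (((AsymAux.Fd mu).filter (fun w => AsymAux.GEb W w xstar)).filter
        (fun w => ResBox κ w = i)).Nonempty
    · obtain ⟨y, hy, hymax⟩ := Finset.exists_max_image _ (AsymAux.key W) hne
      have hy' := hy
      rw [Finset.mem_filter, Finset.mem_filter] at hy'
      obtain ⟨⟨hyFd, hyge⟩, hyres⟩ := hy'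
      have hyvalid : AsymAux.ValidC (ℓ := ℓ) y :=
        ⟨(AsymAux.mem_Fd_bounds mu hyFd).2.2.2.2.1, (AsymAux.mem_Fd_bounds mu hyFd).2.2.2.2.2.1⟩
      have hy_diag : y ∈ diagram mu.part := (AsymAux.mem_Fd mu).1 hyFd
      have hdy := hdom y hy_diag
      have emu : {b' ∈ diagram mu.part | ResBox κ b' = ResBox κ y ∧ (b' = y ∨ ThetaGT W b' y)}
          = ↑((AsymAux.Fd mu).filter
              (fun b' => ResBox κ b' = ResBox κ y ∧ (b' = y ∨ ThetaGT W b' y))) := by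
        ext b'
        simp only [Set.mem_setOf_eq, Finset.coe_filter, AsymAux.mem_Fd]
      have elam : {b' ∈ diagram lam.part | ResBox κ b' = ResBox κ y ∧ (b' = y ∨ ThetaGT W b' y)}
          = ↑((AsymAux.Fd lam).filter
              (fun b' => ResBox κ b' = ResBox κ y ∧ (b' = y ∨ ThetaGT W b' y))) := by
        ext b'
        simp only [Set.mem_setOf_eq, Finset.coe_filter, AsymAux.mem_Fd]
      rw [emu, elam, Set.ncard_coe_finset, Set.ncard_coe_finset] at hdy
      calc (((AsymAux.Fd mu).filter (fun w => AsymAux.GEb W w xstar)).filter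
              (fun w => ResBox κ w = i)).card
          ≤ ((AsymAux.Fd mu).filter
              (fun b' => ResBox κ b' = ResBox κ y ∧ (b' = y ∨ ThetaGT W b' y))).card := by
            refine Finset.card_le_card (fun w hw => ?_)
            rw [Finset.mem_filter, Finset.mem_filter] at hw
            obtain ⟨⟨hwFd, hwge⟩, hwres⟩ := hw
            rw [Finset.mem_filter]
            have hwvalid : AsymAux.ValidC (ℓ := ℓ) w :=
              ⟨(AsymAux.mem_Fd_bounds mu hwFd).2.2.2.2.1,
               (AsymAux.mem_Fd_bounds mu hwFd).2.2.2.2.2.1⟩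
            refine ⟨hwFd, by rw [hwres, hyres], ?_⟩
            exact AsymAux.geb_of_key_le W hwvalid hyvalid
              (hymax w (by rw [Finset.mem_filter, Finset.mem_filter];
                           exact ⟨⟨hwFd, hwge⟩, hwres⟩))
        _ ≤ ((AsymAux.Fd lam).filter
              (fun b' => ResBox κ b' = ResBox κ y ∧ (b' = y ∨ ThetaGT W b' y))).card := hdy
        _ ≤ (((AsymAux.Fd lam).filter (fun w => AsymAux.GEb W w xstar)).filter
              (fun w => ResBox κ w = i)).card := by
            refine Finset.card_le_card (fun w hw => ?_)
            rw [Finset.mem_filter] at hw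
            obtain ⟨hwFd, hwres, hwge⟩ := hw
            rw [Finset.mem_filter, Finset.mem_filter]
            exact ⟨⟨hwFd, AsymAux.geb_trans W hwge hyge⟩, by rw [hwres, hyres]⟩
    · rw [Finset.not_nonempty_iff_eq_empty] at hne
      rw [hne]
      simp
  -- Step D : counting the region boxes
  have hcount : ∀ (M : Multipartition ℓ n),
      ((AsymAux.Fd M).filter (fun w => w.2.2 < k0 ∨ (w.2.2 = k0 ∧
          (w.1 - w.2.1 < t ∨ (w.1 - w.2.1 = t ∧ w.1 ≤ j0))))).card
      = (∑ i ∈ Finset.Icc (1 : ℤ) (k0 - 1), ∑ r ∈ Finset.Icc (1 : ℤ) (n : ℤ), M.part i r)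
        + ∑ r ∈ Finset.Icc (1:ℤ) (n:ℤ),
            ((Finset.Icc (1:ℤ) (n:ℤ)).filter (fun c => c ≤ (M.part k0 r : ℤ) ∧
              (r - c < t ∨ (r - c = t ∧ r ≤ j0)))).card := by
    intro M
    rw [AsymAux.Fd, Finset.filter_filter, AsymAux.card_box_filter]
    rw [AsymAux.sum_Icc_split_three _ hk01 hk0l]
    have hpiece1 : ∀ m ∈ Finset.Icc (1:ℤ) (k0-1), ∀ r ∈ Finset.Icc (1:ℤ) (n:ℤ),
        ((Finset.Icc (1:ℤ) (n:ℤ)).filter (fun c =>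
          (c ≤ (M.part m r : ℤ)) ∧ (m < k0 ∨ (m = k0 ∧
            (r - c < t ∨ (r - c = t ∧ r ≤ j0)))))).card = M.part m r := by
      intro m hm r hr
      rw [Finset.mem_Icc] at hm
      have hcong : (Finset.Icc (1:ℤ) (n:ℤ)).filter (fun c =>
          (c ≤ (M.part m r : ℤ)) ∧ (m < k0 ∨ (m = k0 ∧
            (r - c < t ∨ (r - c = t ∧ r ≤ j0)))))
          = (Finset.Icc (1:ℤ) (n:ℤ)).filter (fun c => c ≤ (M.part m r : ℤ)) := by
        refine Finset.filter_congr (fun c hc => ?_)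
        constructor
        · exact fun h => h.1
        · exact fun h => ⟨h, Or.inl (by omega)⟩
      rw [hcong]
      exact AsymAux.card_filter_le_icc _ (by exact_mod_cast AsymAux.part_le_n M m r)
    have hpiece3 : ∀ m ∈ Finset.Icc (k0+1) (ℓ:ℤ), ∀ r ∈ Finset.Icc (1:ℤ) (n:ℤ),
        ((Finset.Icc (1:ℤ) (n:ℤ)).filter (fun c =>
          (c ≤ (M.part m r : ℤ)) ∧ (m < k0 ∨ (m = k0 ∧
            (r - c < t ∨ (r - c = t ∧ r ≤ j0)))))).card = 0 := by
      intro m hm r hr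
      rw [Finset.mem_Icc] at hm
      rw [Finset.card_eq_zero, Finset.filter_eq_empty_iff]
      intro c hc
      rintro ⟨hcp, hq | hq⟩
      · omega
      · omega
    dsimp only
    have e1 : (∑ m ∈ Finset.Icc (1:ℤ) (k0-1), ∑ r ∈ Finset.Icc (1:ℤ) (n:ℤ),
        ((Finset.Icc (1:ℤ) (n:ℤ)).filter (fun c => c ≤ (M.part m r : ℤ) ∧ (m < k0 ∨ (m = k0 ∧
          (r - c < t ∨ (r - c = t ∧ r ≤ j0)))))).card)
        = ∑ i ∈ Finset.Icc (1 : ℤ) (k0 - 1), ∑ r ∈ Finset.Icc (1 : ℤ) (n : ℤ), M.part i r :=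
      Finset.sum_congr rfl (fun m hm => Finset.sum_congr rfl (fun r hr => hpiece1 m hm r hr))
    have e3 : (∑ m ∈ Finset.Icc (k0+1) (ℓ:ℤ), ∑ r ∈ Finset.Icc (1:ℤ) (n:ℤ),
        ((Finset.Icc (1:ℤ) (n:ℤ)).filter (fun c => c ≤ (M.part m r : ℤ) ∧ (m < k0 ∨ (m = k0 ∧
          (r - c < t ∨ (r - c = t ∧ r ≤ j0)))))).card) = 0 :=
      Finset.sum_eq_zero (fun m hm => Finset.sum_eq_zero (fun r hr => hpiece3 m hm r hr))
    have e2 : (∑ r ∈ Finset.Icc (1:ℤ) (n:ℤ),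
        ((Finset.Icc (1:ℤ) (n:ℤ)).filter (fun c => c ≤ (M.part k0 r : ℤ) ∧ (k0 < k0 ∨ (k0 = k0 ∧
          (r - c < t ∨ (r - c = t ∧ r ≤ j0)))))).card)
        = ∑ r ∈ Finset.Icc (1:ℤ) (n:ℤ),
            ((Finset.Icc (1:ℤ) (n:ℤ)).filter (fun c => c ≤ (M.part k0 r : ℤ) ∧
              (r - c < t ∨ (r - c = t ∧ r ≤ j0)))).card := by
      refine Finset.sum_congr rfl (fun r hr => ?_)
      congr 1
      refine Finset.filter_congr (fun c hc => ?_)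
      constructor
      · rintro ⟨h1, h2 | h2⟩
        · omega
        · exact ⟨h1, h2.2⟩
      · rintro ⟨h1, h2⟩
        exact ⟨h1, Or.inr ⟨rfl, h2⟩⟩
    rw [e1, e2, e3]
    omega
  -- per-row comparison
  have hrowineq : ∀ r ∈ Finset.Icc (1:ℤ) (n:ℤ),
      ((Finset.Icc (1:ℤ) (n:ℤ)).filter (fun c => c ≤ (lam.part k0 r : ℤ) ∧
        (r - c < t ∨ (r - c = t ∧ r ≤ j0)))).card + (if r ≤ j0 then mu.part k0 r else 0)
      ≤ ((Finset.Icc (1:ℤ) (n:ℤ)).filter (fun c => c ≤ (mu.part k0 r : ℤ) ∧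
        (r - c < t ∨ (r - c = t ∧ r ≤ j0)))).card + (if r ≤ j0 then lam.part k0 r else 0) := by
    intro r hr
    rw [Finset.mem_Icc] at hr
    have hLn : (lam.part k0 r : ℤ) ≤ (n:ℤ) := by exact_mod_cast AsymAux.part_le_n lam k0 r
    have hMn : (mu.part k0 r : ℤ) ≤ (n:ℤ) := by exact_mod_cast AsymAux.part_le_n mu k0 r
    by_cases hrj : r ≤ j0
    · rw [if_pos hrj, if_pos hrj]
      have hbl := hlamrow_ge r hr.1 hrj
      by_cases hrt : r - t ≤ 1
      · have hfL : (Finset.Icc (1:ℤ) (n:ℤ)).filter (fun c => c ≤ (lam.part k0 r : ℤ) ∧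
            (r - c < t ∨ (r - c = t ∧ r ≤ j0))) = Finset.Icc (1:ℤ) (lam.part k0 r : ℤ) := by
          ext c
          simp only [Finset.mem_filter, Finset.mem_Icc]
          omega
        have hfM : (Finset.Icc (1:ℤ) (n:ℤ)).filter (fun c => c ≤ (mu.part k0 r : ℤ) ∧
            (r - c < t ∨ (r - c = t ∧ r ≤ j0))) = Finset.Icc (1:ℤ) (mu.part k0 r : ℤ) := by
          ext c
          simp only [Finset.mem_filter, Finset.mem_Icc]
          omega
        rw [hfL, hfM, Int.card_Icc, Int.card_Icc]
        omega
      · have hfL : (Finset.Icc (1:ℤ) (n:ℤ)).filter (fun c => c ≤ (lam.part k0 r : ℤ) ∧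
            (r - c < t ∨ (r - c = t ∧ r ≤ j0))) = Finset.Icc (r - t) (lam.part k0 r : ℤ) := by
          ext c
          simp only [Finset.mem_filter, Finset.mem_Icc]
          omega
        have hfM : (Finset.Icc (1:ℤ) (n:ℤ)).filter (fun c => c ≤ (mu.part k0 r : ℤ) ∧
            (r - c < t ∨ (r - c = t ∧ r ≤ j0))) = Finset.Icc (r - t) (mu.part k0 r : ℤ) := by
          ext c
          simp only [Finset.mem_filter, Finset.mem_Icc]
          omega
        rw [hfL, hfM, Int.card_Icc, Int.card_Icc]
        omega
    · rw [if_neg hrj, if_neg hrj]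
      have hble := hlamrow_le r (by omega)
      have hfL0 : ((Finset.Icc (1:ℤ) (n:ℤ)).filter (fun c => c ≤ (lam.part k0 r : ℤ) ∧
          (r - c < t ∨ (r - c = t ∧ r ≤ j0)))).card = 0 := by
        rw [Finset.card_eq_zero, Finset.filter_eq_empty_iff]
        intro c hc
        rw [Finset.mem_Icc] at hc
        rintro ⟨h1, h2 | h2⟩
        · omega
        · omega
      omega
  have hsum1 := Finset.sum_le_sum hrowineq
  rw [Finset.sum_add_distrib, Finset.sum_add_distrib] at hsum1
  have hite : ∀ (M : Multipartition ℓ n),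
      (∑ r ∈ Finset.Icc (1:ℤ) (n:ℤ), if r ≤ j0 then M.part k0 r else 0)
        = ∑ i ∈ Finset.Icc (1:ℤ) j0, M.part k0 i := by
    intro M
    rw [← Finset.sum_filter]
    refine Finset.sum_congr ?_ (fun _ _ => rfl)
    ext x
    simp only [Finset.mem_filter, Finset.mem_Icc]
    omega
  rw [hite lam, hite mu] at hsum1
  -- subset comparisons between GEb-sets and region sets
  have hsubL : ((AsymAux.Fd lam).filter (fun w => AsymAux.GEb W w xstar)).card
      ≤ ((AsymAux.Fd lam).filter (fun w => w.2.2 < k0 ∨ (w.2.2 = k0 ∧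
          (w.1 - w.2.1 < t ∨ (w.1 - w.2.1 = t ∧ w.1 ≤ j0))))).card := by
    refine Finset.card_le_card (fun w hw => ?_)
    rw [Finset.mem_filter] at hw ⊢
    exact ⟨hw.1, hQlam w hw.1 hw.2⟩
  have hsubM : ((AsymAux.Fd mu).filter (fun w => w.2.2 < k0 ∨ (w.2.2 = k0 ∧
          (w.1 - w.2.1 < t ∨ (w.1 - w.2.1 = t ∧ w.1 ≤ j0))))).card
      ≤ ((AsymAux.Fd mu).filter (fun w => AsymAux.GEb W w xstar)).card := by
    refine Finset.card_le_card (fun w hw => ?_)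
    rw [Finset.mem_filter] at hw ⊢
    exact ⟨hw.1, hQmu w hw.1 hw.2⟩
  have hcl := hcount lam
  have hcm := hcount mu
  omega
end

section
/- Suppose θ is a weighting with θ_1 < θ_2 < ⋯ < θ_ℓ, fix a rational ε with 0 < ε < 1/(2nℓ), and let ω = (∅,…,∅,(1^n)) be the ℓ-multipartition whose Young diagram is {(r,1,ℓ) : 1 ≤ r ≤ n}. Then for every ℓ-multipartition λ of n, the map φ sending a standard tableau t of shape λ to the tableau T : [λ] → {I_(r,1,ℓ) : 1 ≤ r ≤ n} defined by T(b) = I_(t(b),1,ℓ) is a bijection from Std(λ) onto the set of semistandard tableaux of shape λ and weight ω. -/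
section Aux

variable {ℓ : ℕ} (W : Weighting ℓ) (ε : ℚ)

lemma load_col (k m : ℤ) :
    loading W ε (k, 1, m) = W.θ m - 1 + ε + (k : ℚ) * (1 + ε) := by
  simp only [loading]
  push_cast
  ring

lemma load_mono (hε0 : 0 < ε) {j k m : ℤ} (h : j ≤ k) :
    loading W ε (j, 1, m) ≤ loading W ε (k, 1, m) := by
  rw [load_col, load_col]
  have hjk : (j : ℚ) ≤ (k : ℚ) := by exact_mod_cast h
  nlinarith

lemma load_gap (hε0 : 0 < ε) {j k m : ℤ} (h : j < k) :
    loading W ε (j, 1, m) + 1 < loading W ε (k, 1, m) := by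
  rw [load_col, load_col]
  have hjk : (j : ℚ) + 1 ≤ (k : ℚ) := by exact_mod_cast h
  nlinarith

lemma load_inj (hε0 : 0 < ε) {j k m : ℤ}
    (h : loading W ε (j, 1, m) = loading W ε (k, 1, m)) : j = k := by
  rcases lt_trichotomy j k with hlt | heq | hgt
  · have := load_gap W ε hε0 (m := m) hlt; linarith
  · exact heq
  · have := load_gap W ε hε0 (m := m) hgt; linarith

lemma box_range {n : ℕ} (lam : Multipartition ℓ n) {b : Box}
    (hb : b ∈ diagram lam.part) : 1 ≤ b.1 ∧ 1 ≤ b.2.2 ∧ b.2.2 ≤ (ℓ : ℤ) := by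
  obtain ⟨h1, h2⟩ := hb
  have hne : lam.part b.2.2 b.1 ≠ 0 := by
    intro h0; rw [h0] at h2; simp at h2; omega
  refine ⟨?_, ?_, ?_⟩ <;> by_contra hc <;> push_neg at hc
  · exact hne (lam.supp _ _ (Or.inr (Or.inr hc)))
  · exact hne (lam.supp _ _ (Or.inl hc))
  · exact hne (lam.supp _ _ (Or.inr (Or.inl hc)))

end Aux

/-- `φ : t ↦ (b ↦ I_(t(b),1,ℓ))` is a bijection from `Std(λ)` onto the
semistandard tableaux of shape `λ` and weight `ω`. -/
theorem std_equiv_sstd (ℓ n : ℕ) (hℓ : 1 ≤ ℓ) (hn : 1 ≤ n) (W : Weighting ℓ)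
    (hinc : ∀ i j : ℤ, 1 ≤ i → i < j → j ≤ (ℓ : ℤ) → W.θ i < W.θ j)
    (ε : ℚ) (hε0 : 0 < ε) (hε1 : ε < 1 / (2 * n * ℓ))
    (ω : Multipartition ℓ n)
    (hω : diagram ω.part =
      {b : Box | b.2.1 = 1 ∧ b.2.2 = (ℓ : ℤ) ∧ 1 ≤ b.1 ∧ b.1 ≤ (n : ℤ)})
    (lam : Multipartition ℓ n) :
    (∀ t : Box → ℕ, IsStdTableau lam t →
      IsSStdTableau W ε lam ω (fun b => loading W ε (((t b : ℤ), 1, (ℓ : ℤ)) : Box))) ∧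
    (∀ t t' : Box → ℕ, IsStdTableau lam t → IsStdTableau lam t' →
      (∀ b ∈ diagram lam.part,
        loading W ε (((t b : ℤ), 1, (ℓ : ℤ)) : Box) =
          loading W ε (((t' b : ℤ), 1, (ℓ : ℤ)) : Box)) →
      t = t') ∧
    (∀ T : Box → ℚ, IsSStdTableau W ε lam ω T →
      ∃ t : Box → ℕ, IsStdTableau lam t ∧
        ∀ b ∈ diagram lam.part, T b = loading W ε (((t b : ℤ), 1, (ℓ : ℤ)) : Box)) := by
  refine ⟨?_, ?_, ?_⟩
  · -- forward map lands in semistandard tableaux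
    intro t ht
    constructor
    · intro b hb
      refine ⟨((t b : ℤ), 1, (ℓ : ℤ)), ?_, rfl⟩
      rw [hω]
      refine ⟨rfl, rfl, ?_, ?_⟩
      · show (1 : ℤ) ≤ (t b : ℤ); exact_mod_cast (ht.mem b hb).1
      · show ((t b : ℤ)) ≤ (n : ℤ); exact_mod_cast (ht.mem b hb).2
    · intro b hb b' hb' h
      have := load_inj W ε hε0 h
      exact ht.injOn b hb b' hb' (by exact_mod_cast this)
    · intro b' hb'
      obtain ⟨r, c, m⟩ := b'
      rw [hω] at hb'
      obtain ⟨h1, h2, h3, h4⟩ := hb'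
      simp only at h1 h2 h3 h4
      subst h1; subst h2
      obtain ⟨b, hb, htb⟩ := ht.surjOn r.toNat (by omega) (by omega)
      refine ⟨b, hb, ?_⟩
      have : (t b : ℤ) = r := by omega
      rw [this]
    · intro m hm
      have hm1 : (1 : ℤ) ≤ m := (box_range lam hm).2.1
      have hm2 : m ≤ (ℓ : ℤ) := (box_range lam hm).2.2
      have hθ : W.θ m ≤ W.θ (ℓ : ℤ) := by
        rcases eq_or_lt_of_le hm2 with h | h
        · rw [h]
        · exact le_of_lt (hinc m ℓ hm1 h le_rfl)
      have hk : 1 ≤ t (1, 1, m) := (ht.mem _ hm).1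
      have hk' : (1 : ℚ) ≤ ((t (1, 1, m) : ℤ) : ℚ) := by exact_mod_cast hk
      simp only [load_col]
      nlinarith
    · intro r c m h1 h2
      have hr : r - 1 + 1 = r := by ring
      have hcol := ht.col_lt (r - 1) c m h2 (by rw [hr]; exact h1)
      rw [hr] at hcol
      exact load_gap W ε hε0 (by exact_mod_cast hcol)
    · intro r c m h1 h2
      have hc : c - 1 + 1 = c := by ring
      have hrow := ht.row_lt r (c - 1) m h2 (by rw [hc]; exact h1)
      rw [hc] at hrow
      have := load_gap W ε hε0 (m := (ℓ : ℤ)) (by exact_mod_cast hrow :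
        ((t (r, c - 1, m) : ℤ)) < ((t (r, c, m) : ℤ)))
      linarith
  · -- injectivity
    intro t t' ht ht' h
    funext b
    by_cases hb : b ∈ diagram lam.part
    · have := load_inj W ε hε0 (h b hb)
      exact_mod_cast this
    · rw [ht.zero_off b hb, ht'.zero_off b hb]
  · -- surjectivity
    intro T hT
    have hch : ∀ b ∈ diagram lam.part,
        ∃ r : ℤ, 1 ≤ r ∧ r ≤ (n : ℤ) ∧ T b = loading W ε (r, 1, (ℓ : ℤ)) := by
      intro b hb
      obtain ⟨b', hb', hTb⟩ := hT.mem b hb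
      obtain ⟨r, c, m⟩ := b'
      rw [hω] at hb'
      obtain ⟨h1, h2, h3, h4⟩ := hb'
      simp only at h1 h2 h3 h4
      subst h1; subst h2
      exact ⟨r, h3, h4, hTb⟩
    classical
    set t : Box → ℕ := fun b =>
      if hb : b ∈ diagram lam.part then ((hch b hb).choose).toNat else 0 with ht_def
    have key : ∀ b ∈ diagram lam.part,
        1 ≤ t b ∧ t b ≤ n ∧ T b = loading W ε (((t b : ℤ), 1, (ℓ : ℤ)) : Box) := by
      intro b hb
      obtain ⟨h1, h2, h3⟩ := (hch b hb).choose_spec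
      have htb : t b = ((hch b hb).choose).toNat := dif_pos hb
      have hcast : ((t b : ℤ)) = (hch b hb).choose := by omega
      refine ⟨by omega, by omega, ?_⟩
      rw [hcast]; exact h3
    have tlt : ∀ b ∈ diagram lam.part, ∀ b' ∈ diagram lam.part, b ≠ b' →
        T b - 1 < T b' → t b < t b' := by
      intro b hb b' hb' hne hlt
      obtain ⟨-, -, h3⟩ := key b hb
      obtain ⟨-, -, h3'⟩ := key b' hb'
      rw [h3, h3'] at hlt
      have hle : t b ≤ t b' := by
        by_contra hgt
        push_neg at hgt
        have := load_gap W ε hε0 (m := (ℓ : ℤ)) (by exact_mod_cast hgt :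
          ((t b' : ℤ)) < ((t b : ℤ)))
        linarith
      have hneq : t b ≠ t b' := by
        intro he
        apply hne
        apply hT.injOn b hb b' hb'
        rw [h3, h3', he]
      omega
    refine ⟨t, ⟨?_, ?_, ?_, ?_, ?_, ?_⟩, fun b hb => (key b hb).2.2⟩
    · exact fun b hb => ⟨(key b hb).1, (key b hb).2.1⟩
    · intro b hb b' hb' he
      apply hT.injOn b hb b' hb'
      rw [(key b hb).2.2, (key b' hb').2.2, he]
    · intro k hk1 hk2
      have hmem : (((k : ℤ), 1, (ℓ : ℤ)) : Box) ∈ diagram ω.part := by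
        rw [hω]
        refine ⟨rfl, rfl, ?_, ?_⟩
        · show (1 : ℤ) ≤ (k : ℤ); exact_mod_cast hk1
        · show ((k : ℤ)) ≤ (n : ℤ); exact_mod_cast hk2
      obtain ⟨b, hb, hTb⟩ := hT.surjOn _ hmem
      refine ⟨b, hb, ?_⟩
      have h3 := (key b hb).2.2
      rw [h3] at hTb
      have := load_inj W ε hε0 hTb
      exact_mod_cast this
    · intro r c m h1 h2
      have hc : c + 1 - 1 = c := by ring
      have := hT.row r (c + 1) m h2 (by rw [hc]; exact h1)
      rw [hc] at this
      exact tlt _ h1 _ h2 (by simp) this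
    · intro r c m h1 h2
      have hr : r + 1 - 1 = r := by ring
      have := hT.col (r + 1) c m h2 (by rw [hr]; exact h1)
      rw [hr] at this
      exact tlt _ h1 _ h2 (by simp) (by linarith)
    · intro b hb
      exact dif_neg hb
end

section
/- Let θ be a weighting, ε a rational with 0 < ε < 1/(2nℓ), and let λ, μ be ℓ-multipartitions of n. Let S be a semistandard tableau of shape λ and weight μ. Define a relation ≻ on the boxes of [λ] by declaring b ≻ b′ for distinct boxes b, b′ ∈ [λ] if at least one of the following holds: (a) I_b < I_{b′} + 1 and S(b) > S(b′) + 1; (b) I_b < I_{b′} − 1 and S(b) > S(b′) − 1; (c) I_b < I_{b′} and S(b) > S(b′); (d) b = (r,c,m) and b′ = (r,c−1,m) for some r,c,m; (e) b = (r,c,m) and b′ = (r−1,c,m) for some r,c,m. Then there exists a standard tableau t ∈ Std(λ) such that for all distinct boxes b, b′ ∈ [λ], b ≻ b′ implies t(b) > t(b′). -/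
section Helpers

lemma part_anti {ℓ n : ℕ} (q : Multipartition ℓ n) (m : ℤ) {r1 r2 : ℤ}
    (h1 : 1 ≤ r1) (h : r1 ≤ r2) : q.part m r2 ≤ q.part m r1 := by
  exact Int.le_induction (motive := fun r _ => q.part m r ≤ q.part m r1) (le_refl _)
    (fun k hk ih => le_trans (q.decr m k (by omega)) ih) r2 h

lemma box_bounds {ℓ n : ℕ} (q : Multipartition ℓ n) {b : Box} (hb : b ∈ diagram q.part) :
    1 ≤ b.1 ∧ b.1 ≤ (n : ℤ) ∧ 1 ≤ b.2.1 ∧ b.2.1 ≤ (n : ℤ) ∧ 1 ≤ b.2.2 ∧ b.2.2 ≤ (ℓ : ℤ) := by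
  obtain ⟨hc1, hc2⟩ := hb
  have hpos : (1 : ℤ) ≤ (q.part b.2.2 b.1 : ℤ) := le_trans hc1 hc2
  have h0 : ¬(b.2.2 < 1 ∨ (ℓ : ℤ) < b.2.2 ∨ b.1 < 1) := fun hcon => by
    rw [q.supp _ _ hcon] at hpos; omega
  push_neg at h0
  obtain ⟨hm1, hm2, hr1⟩ := h0
  have hcn : b.2.1 ≤ (n : ℤ) := by
    have hsub : ↑((Finset.Icc (1:ℤ) b.2.1).image (fun j => ((b.1, j, b.2.2) : Box)))
        ⊆ diagram q.part := by
      intro x hx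
      simp only [Finset.coe_image, Set.mem_image, Finset.mem_coe, Finset.mem_Icc] at hx
      obtain ⟨j, ⟨hj1, hj2⟩, rfl⟩ := hx
      exact ⟨hj1, le_trans hj2 hc2⟩
    have hcard := Set.ncard_le_ncard hsub q.finite
    rw [Set.ncard_coe_finset, q.size] at hcard
    have hinj : Function.Injective (fun j : ℤ => ((b.1, j, b.2.2) : Box)) := by
      intro x y hxy; simpa using hxy
    rw [Finset.card_image_of_injective _ hinj, Int.card_Icc] at hcard
    omega
  have hrn : b.1 ≤ (n : ℤ) := by
    have hsub : ↑((Finset.Icc (1:ℤ) b.1).image (fun i => ((i, 1, b.2.2) : Box)))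
        ⊆ diagram q.part := by
      intro x hx
      simp only [Finset.coe_image, Set.mem_image, Finset.mem_coe, Finset.mem_Icc] at hx
      obtain ⟨i, ⟨hi1, hi2⟩, rfl⟩ := hx
      refine ⟨le_refl _, ?_⟩
      show (1 : ℤ) ≤ (q.part b.2.2 i : ℤ)
      have := part_anti q b.2.2 hi1 hi2
      omega
    have hcard := Set.ncard_le_ncard hsub q.finite
    rw [Set.ncard_coe_finset, q.size] at hcard
    have hinj : Function.Injective (fun i : ℤ => ((i, 1, b.2.2) : Box)) := by
      intro x y hxy; simpa using hxy
    rw [Finset.card_image_of_injective _ hinj, Int.card_Icc] at hcard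
    omega
  exact ⟨hr1, hrn, hc1, hcn, hm1, hm2⟩

lemma load_int {ℓ n : ℕ} (W : Weighting ℓ) (q : Multipartition ℓ n) {b : Box}
    (hb : b ∈ diagram q.part) :
    ∃ z : ℤ, (ℓ : ℚ) * (W.θ b.2.2 + (b.1 : ℚ) - (b.2.1 : ℚ)) = (z : ℚ) := by
  obtain ⟨_, _, _, _, hm1, hm2⟩ := box_bounds q hb
  obtain ⟨z, hz⟩ := W.mul_int b.2.2 hm1 hm2
  exact ⟨z + ℓ * (b.1 - b.2.1), by push_cast; linear_combination hz⟩

lemma arith_key {ℓ n : ℕ} (hℓ : 1 ≤ ℓ) (hn : 1 ≤ n) {ε : ℚ} (hε0 : 0 < ε)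
    (hε1 : ε < 1 / (2 * n * ℓ)) {q : ℚ} (hq : ∃ z : ℤ, (ℓ : ℚ) * q = (z : ℚ))
    {k : ℤ} (hk : |k| ≤ 2 * (n : ℤ) - 1) (h : -ε < q + k * ε) : 0 ≤ q + k * ε := by
  obtain ⟨z, hz⟩ := hq
  have hL : (0 : ℚ) < ℓ := by exact_mod_cast Nat.pos_of_ne_zero (by omega)
  have hN : (0 : ℚ) < n := by exact_mod_cast Nat.pos_of_ne_zero (by omega)
  have hε1' : ε * (2 * n * ℓ) < 1 := by
    rw [lt_div_iff₀ (by positivity)] at hε1; linarith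
  rcases eq_or_ne z 0 with h0 | h0
  · have hq0 : q = 0 := by
      rw [h0] at hz
      have := mul_eq_zero.mp (by exact_mod_cast hz)
      rcases this with h | h
      · exact absurd h (by positivity)
      · exact h
    rw [hq0] at h ⊢
    simp only [zero_add] at h ⊢
    have hk0 : 0 ≤ k := by
      by_contra hneg
      push_neg at hneg
      have hk1 : k ≤ -1 := by omega
      have : (k : ℚ) ≤ -1 := by exact_mod_cast hk1
      nlinarith
    have : (0 : ℚ) ≤ (k : ℚ) := by exact_mod_cast hk0
    positivity
  · have h1 : (1 : ℚ) ≤ |(z : ℚ)| := by exact_mod_cast Int.one_le_abs (by exact_mod_cast h0)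
    have hqz : q = z / ℓ := by field_simp; linarith [hz]
    have habsq : 1 / (ℓ : ℚ) ≤ |q| := by
      rw [hqz, abs_div, abs_of_pos hL]
      gcongr
    have hkabs : |(k : ℚ)| ≤ 2 * n - 1 := by
      have h2 : ((|k| : ℤ) : ℚ) ≤ ((2 * (n : ℤ) - 1 : ℤ) : ℚ) := by exact_mod_cast hk
      rw [Int.cast_abs] at h2
      push_cast at h2
      linarith
    have hkε1 : (k : ℚ) * ε ≤ (2 * n - 1) * ε := by nlinarith [(abs_le.mp hkabs).2]
    have hkε2 : -((2 * n - 1) * ε) ≤ (k : ℚ) * ε := by nlinarith [(abs_le.mp hkabs).1]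
    have hbig : (2 * (n : ℚ) - 1) * ε + ε < 1 / ℓ := by
      rw [lt_div_iff₀ hL]
      have heq : ((2 * (n : ℚ) - 1) * ε + ε) * ℓ = ε * (2 * n * ℓ) := by ring
      rw [heq]; exact hε1'
    rcases lt_trichotomy q 0 with hq0 | hq0 | hq0
    · exfalso
      have habs : |q| = -q := abs_of_neg hq0
      rw [habs] at habsq
      linarith
    · exfalso
      rw [hq0, mul_zero] at hz
      exact h0 (by exact_mod_cast hz.symm)
    · have habs : |q| = q := abs_of_pos hq0
      rw [habs] at habsq
      linarith

lemma case_de {ℓ n : ℕ} (hℓ : 1 ≤ ℓ) (hn : 1 ≤ n) (W : Weighting ℓ) {ε : ℚ}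
    (hε0 : 0 < ε) (hε1 : ε < 1 / (2 * n * ℓ)) (mu : Multipartition ℓ n)
    {u u' : Box} (hu : u ∈ diagram mu.part) (hu' : u' ∈ diagram mu.part)
    {δ : ℚ} (hδ : δ = 1 ∨ δ = -1)
    (hlt : loading W ε u' - δ < loading W ε u) :
    0 ≤ loading W ε u - loading W ε u' + δ - ε := by
  obtain ⟨z1, hz1⟩ := load_int W mu hu
  obtain ⟨z2, hz2⟩ := load_int W mu hu'
  obtain ⟨hu1, hu2, hu3, hu4, -, -⟩ := box_bounds mu hu
  obtain ⟨hv1, hv2, hv3, hv4, -, -⟩ := box_bounds mu hu'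
  set q : ℚ := (W.θ u.2.2 + (u.1 : ℚ) - (u.2.1 : ℚ)) - (W.θ u'.2.2 + (u'.1 : ℚ) - (u'.2.1 : ℚ)) + δ
    with hqdef
  set k : ℤ := u.1 + u.2.1 - u'.1 - u'.2.1 - 1 with hkdef
  have hq : ∃ z : ℤ, (ℓ : ℚ) * q = (z : ℚ) := by
    rcases hδ with rfl | rfl
    · exact ⟨z1 - z2 + ℓ, by rw [hqdef]; push_cast; linear_combination hz1 - hz2⟩
    · exact ⟨z1 - z2 - ℓ, by rw [hqdef]; push_cast; linear_combination hz1 - hz2⟩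
  have hk : |k| ≤ 2 * (n : ℤ) - 1 := by rw [hkdef, abs_le]; constructor <;> omega
  have heq : loading W ε u - loading W ε u' + δ - ε = q + k * ε := by
    rw [hqdef, hkdef]; simp only [loading]; push_cast; ring
  rw [heq]
  refine arith_key hℓ hn hε0 hε1 hq hk ?_
  rw [← heq]
  simp only [loading] at hlt ⊢
  linarith

lemma keyLt {h h' : ℚ} {s s' r r' c c' m m' : ℤ}
    (H : h' < h ∨ (h' = h ∧ s' < s)) :
    toLex (h', toLex (s', toLex (r', toLex (c', m')))) <
      toLex (h, toLex (s, toLex (r, toLex (c, m)))) := by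
  rcases H with H | ⟨H1, H2⟩
  · exact Prod.Lex.lt_iff.mpr (Or.inl H)
  · exact Prod.Lex.lt_iff.mpr (Or.inr ⟨H1, Prod.Lex.lt_iff.mpr (Or.inl H2)⟩)

lemma key_cmp {ℓ n : ℕ} (hℓ : 1 ≤ ℓ) (hn : 1 ≤ n) (W : Weighting ℓ) {ε : ℚ}
    (hε0 : 0 < ε) (hε1 : ε < 1 / (2 * n * ℓ)) {lam mu : Multipartition ℓ n} {S : Box → ℚ}
    (hS : IsSStdTableau W ε lam mu S) {b b' : Box}
    (hb : b ∈ diagram lam.part) (hb' : b' ∈ diagram lam.part)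
    (H : (loading W ε b < loading W ε b' + 1 ∧ S b' + 1 < S b) ∨
          (loading W ε b < loading W ε b' - 1 ∧ S b' - 1 < S b) ∨
          (loading W ε b < loading W ε b' ∧ S b' < S b) ∨
          (b.1 = b'.1 ∧ b.2.2 = b'.2.2 ∧ b.2.1 = b'.2.1 + 1) ∨
          (b.2.1 = b'.2.1 ∧ b.2.2 = b'.2.2 ∧ b.1 = b'.1 + 1)) :
    S b' - loading W ε b' < S b - loading W ε b ∨
      (S b' - loading W ε b' = S b - loading W ε b ∧ b'.1 + b'.2.1 < b.1 + b.2.1) := by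
  obtain ⟨u, hu, hSb⟩ := hS.mem b hb
  obtain ⟨u', hu', hSb'⟩ := hS.mem b' hb'
  obtain ⟨r, c, m⟩ := b
  obtain ⟨r', c', m'⟩ := b'
  simp only at H hu hu' hSb hSb' ⊢
  rcases H with ⟨h1, h2⟩ | ⟨h1, h2⟩ | ⟨h1, h2⟩ | ⟨h1, h2, h3⟩ | ⟨h1, h2, h3⟩
  · left; linarith
  · left; linarith
  · left; linarith
  · -- case (d): right neighbour in the same row
    subst h1; subst h2; subst h3
    have hrow := hS.row r (c' + 1) m hb (by simpa using hb')
    have hc : (c' + 1 - 1 : ℤ) = c' := by ring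
    rw [hc] at hrow
    have hload : loading W ε (r, c' + 1, m) - loading W ε (r, c', m) = -1 + ε := by
      simp only [loading]; push_cast; ring
    have hSdiff : S (r, c' + 1, m) - S (r, c', m) = loading W ε u - loading W ε u' := by
      rw [hSb, hSb']
    have hcore := case_de hℓ hn W hε0 hε1 mu hu hu' (Or.inl rfl : (1:ℚ) = 1 ∨ (1:ℚ) = -1)
      (by rw [← hSb, ← hSb']; linarith)
    rcases eq_or_lt_of_le hcore with hzero | hpos
    · right
      constructor
      · linarith
      · omega
    · left; linarith
  · -- case (e): neighbour below in the same column
    subst h1; subst h2; subst h3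
    have hcol := hS.col (r' + 1) c m hb (by simpa using hb')
    have hr : (r' + 1 - 1 : ℤ) = r' := by ring
    rw [hr] at hcol
    have hload : loading W ε (r' + 1, c, m) - loading W ε (r', c, m) = 1 + ε := by
      simp only [loading]; push_cast; ring
    have hcore := case_de hℓ hn W hε0 hε1 mu hu hu' (Or.inr rfl : (-1:ℚ) = 1 ∨ (-1:ℚ) = -1)
      (by rw [← hSb, ← hSb']; linarith)
    rcases eq_or_lt_of_le hcore with hzero | hpos
    · right
      constructor
      · linarith [hSb, hSb']
      · omega
    · left; linarith [hSb, hSb']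

end Helpers

/-- for every semistandard tableau `S` of shape `λ` and weight `μ` there is
a standard tableau of shape `λ` factoring through `S` (compatible with the relation `≻`). -/
theorem exists_std_factoring (ℓ n : ℕ) (hℓ : 1 ≤ ℓ) (hn : 1 ≤ n) (W : Weighting ℓ)
    (ε : ℚ) (hε0 : 0 < ε) (hε1 : ε < 1 / (2 * n * ℓ))
    (lam mu : Multipartition ℓ n) (S : Box → ℚ)
    (hS : IsSStdTableau W ε lam mu S) :
    ∃ t : Box → ℕ, IsStdTableau lam t ∧
      ∀ b ∈ diagram lam.part, ∀ b' ∈ diagram lam.part, b ≠ b' →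
        ((loading W ε b < loading W ε b' + 1 ∧ S b' + 1 < S b) ∨
          (loading W ε b < loading W ε b' - 1 ∧ S b' - 1 < S b) ∨
          (loading W ε b < loading W ε b' ∧ S b' < S b) ∨
          (b.1 = b'.1 ∧ b.2.2 = b'.2.2 ∧ b.2.1 = b'.2.1 + 1) ∨
          (b.2.1 = b'.2.1 ∧ b.2.2 = b'.2.2 ∧ b.1 = b'.1 + 1)) →
        t b' < t b := by
  classical
  set key : Box → ℚ ×ₗ (ℤ ×ₗ (ℤ ×ₗ (ℤ ×ₗ ℤ))) := fun b =>
    toLex (S b - loading W ε b, toLex (b.1 + b.2.1, toLex (b.1, toLex (b.2.1, b.2.2)))) with hkey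
  have hkeyinj : Function.Injective key := by
    intro x y hxy
    simp only [hkey, toLex_inj, Prod.mk.injEq] at hxy
    obtain ⟨-, -, h1, h2, h3⟩ := hxy
    exact Prod.ext h1 (Prod.ext h2 h3)
  set D : Finset Box := lam.finite.toFinset with hDdef
  have hDmem : ∀ b : Box, b ∈ D ↔ b ∈ diagram lam.part := fun b => Set.Finite.mem_toFinset _
  have hDcard : D.card = n := by
    rw [hDdef, ← Set.ncard_eq_toFinset_card (diagram lam.part) lam.finite, lam.size]
  set kf : Box → ℕ := fun b => ((D.image key).filter (fun x => x ≤ key b)).card with hkf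
  have hone : ∀ b ∈ D, 1 ≤ kf b := by
    intro b hb
    rw [hkf]
    refine Finset.card_pos.mpr ⟨key b, Finset.mem_filter.mpr ⟨Finset.mem_image_of_mem _ hb, le_refl _⟩⟩
  have hlen : ∀ b : Box, kf b ≤ n := by
    intro b
    rw [hkf]
    calc ((D.image key).filter (fun x => x ≤ key b)).card ≤ (D.image key).card :=
          Finset.card_filter_le _ _
      _ = n := by rw [Finset.card_image_of_injective _ hkeyinj, hDcard]
  have hmono : ∀ b ∈ D, ∀ b' ∈ D, key b' < key b → kf b' < kf b := by
    intro b hb b' hb' hlt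
    rw [hkf]
    apply Finset.card_lt_card
    have hsub : (D.image key).filter (fun x => x ≤ key b') ⊆
        (D.image key).filter (fun x => x ≤ key b) := by
      intro x hx
      obtain ⟨hx1, hx2⟩ := Finset.mem_filter.mp hx
      exact Finset.mem_filter.mpr ⟨hx1, le_trans hx2 hlt.le⟩
    refine (Finset.ssubset_iff_of_subset hsub).mpr
      ⟨key b, Finset.mem_filter.mpr ⟨Finset.mem_image_of_mem _ hb, le_refl _⟩, ?_⟩
    intro hmem
    exact absurd ((Finset.mem_filter.mp hmem).2) (not_le.mpr hlt)
  have hinj : ∀ b ∈ D, ∀ b' ∈ D, kf b = kf b' → b = b' := by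
    intro b hb b' hb' heq
    rcases lt_trichotomy (key b) (key b') with h | h | h
    · exact absurd heq (by have := hmono b' hb' b hb h; omega)
    · exact hkeyinj h
    · exact absurd heq (by have := hmono b hb b' hb' h; omega)
  refine ⟨fun b => if b ∈ D then kf b else 0, ⟨?_, ?_, ?_, ?_, ?_, ?_⟩, ?_⟩
  · intro b hb
    rw [if_pos ((hDmem b).mpr hb)]
    exact ⟨hone b ((hDmem b).mpr hb), hlen b⟩
  · intro b hb b' hb' heq
    rw [if_pos ((hDmem b).mpr hb), if_pos ((hDmem b').mpr hb')] at heq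
    exact hinj b ((hDmem b).mpr hb) b' ((hDmem b').mpr hb') heq
  · intro k hk1 hk2
    have hsurj := Finset.surj_on_of_inj_on_of_card_le (s := D) (t := Finset.Icc 1 n)
      (fun b _ => kf b) (fun b hb => Finset.mem_Icc.mpr ⟨hone b hb, hlen b⟩)
      (fun b b' hb hb' h => hinj b hb b' hb' h) (by rw [hDcard, Nat.card_Icc]; omega)
    obtain ⟨b, hb, hbk⟩ := hsurj k (Finset.mem_Icc.mpr ⟨hk1, hk2⟩)
    exact ⟨b, (hDmem b).mp hb, by rw [if_pos hb]; exact hbk.symm⟩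
  · intro r c m h1 h2
    have hcmp := key_cmp hℓ hn W hε0 hε1 hS h2 h1
      (Or.inr (Or.inr (Or.inr (Or.inl ⟨rfl, rfl, rfl⟩))))
    have hklt : key (r, c, m) < key (r, c + 1, m) := by rw [hkey]; exact keyLt hcmp
    rw [if_pos ((hDmem _).mpr h1), if_pos ((hDmem _).mpr h2)]
    exact hmono _ ((hDmem _).mpr h2) _ ((hDmem _).mpr h1) hklt
  · intro r c m h1 h2
    have hcmp := key_cmp hℓ hn W hε0 hε1 hS h2 h1
      (Or.inr (Or.inr (Or.inr (Or.inr ⟨rfl, rfl, rfl⟩))))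
    have hklt : key (r, c, m) < key (r + 1, c, m) := by rw [hkey]; exact keyLt hcmp
    rw [if_pos ((hDmem _).mpr h1), if_pos ((hDmem _).mpr h2)]
    exact hmono _ ((hDmem _).mpr h2) _ ((hDmem _).mpr h1) hklt
  · intro b hb
    rw [if_neg (fun hmem => hb ((hDmem b).mp hmem))]
  · intro b hb b' hb' hne H
    have hcmp := key_cmp hℓ hn W hε0 hε1 hS hb hb' H
    have hklt : key b' < key b := by rw [hkey]; exact keyLt hcmp
    show (if b' ∈ D then kf b' else 0) < (if b ∈ D then kf b else 0)
    rw [if_pos ((hDmem b).mpr hb), if_pos ((hDmem b').mpr hb')]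
    exact hmono _ ((hDmem b).mpr hb) _ ((hDmem b').mpr hb') hklt
end
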